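/- arXiv:2605.08101 — 9 statements merged into one kernel-verified Lean document; each statement's English description precedes it below -/
import Mathlib

section
/- Let A be an n×n real symmetric matrix (n ≥ 2) such that every (n−1)×(n−1) principal submatrix of A is positive semidefinite and det(A) < 0. Then A has exactly one negative eigenvalue, and all other eigenvalues are nonnegative. -/
open Matrix

/-!
The determinant is the product of the eigenvalues, so some eigenvalue is negative. If two
eigenvalues were negative, the quadratic form would be negative definite on the plane spanned by
their eigenvectors; that plane meets the hyperplane `x k = 0` nontrivially, where the form is
nonnegative because the principal submatrix deleting `k` is positive semidefinite.
-/

variable {ι : Type*} [Fintype ι]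

lemma Fintype.sum_subtype_eq_sum_of_eq_zero {M : Type*} [AddCommMonoid M] {p : ι → Prop}
    [DecidablePred p] {f : ι → M} (hf : ∀ j, ¬ p j → f j = 0) :
    ∑ j : {j // p j}, f j = ∑ j, f j := by
  rw [← Fintype.sum_subtype_add_sum_subtype p f,
    Finset.sum_eq_zero fun (j : {j // ¬ p j}) _ => hf j j.2, add_zero]

namespace Matrix

lemma dotProduct_mulVec_nonneg_of_posSemidef_submatrix {R : Type*} [Ring R] [PartialOrder R]
    [StarRing R] {A : Matrix ι ι R} {p : ι → Prop} [DecidablePred p]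
    (hA : (A.submatrix (Subtype.val : {j // p j} → ι) Subtype.val).PosSemidef)
    {x : ι → R} (hx : ∀ j, ¬ p j → x j = 0) : 0 ≤ star x ⬝ᵥ A *ᵥ x := by
  convert hA.dotProduct_mulVec_nonneg (fun j => x j) using 1
  simp only [dotProduct, mulVec, submatrix_apply, Pi.star_apply]
  have hinner (i : ι) : ∑ j : {j // p j}, A i j * x j = ∑ j, A i j * x j :=
    Fintype.sum_subtype_eq_sum_of_eq_zero (f := fun j => A i j * x j) fun j hj => by simp [hx j hj]
  simp only [hinner]
  exact (Fintype.sum_subtype_eq_sum_of_eq_zero (f := fun i => star (x i) * ∑ j, A i j * x j)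
    fun i hi => by simp [hx i hi]).symm

variable [DecidableEq ι] {A : Matrix ι ι ℝ}

lemma IsHermitian.dotProduct_mulVec_smul_add_smul_eigenvectorBasis (hA : A.IsHermitian) {i j : ι}
    (hij : i ≠ j) (a b : ℝ) :
    let x := a • ⇑(hA.eigenvectorBasis i) + b • ⇑(hA.eigenvectorBasis j)
    x ⬝ᵥ A *ᵥ x = a ^ 2 * hA.eigenvalues i + b ^ 2 * hA.eigenvalues j := by
  have horth (p q : ι) :
      ⇑(hA.eigenvectorBasis p) ⬝ᵥ ⇑(hA.eigenvectorBasis q) = if p = q then 1 else 0 := by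
    simpa [PiLp.inner_apply, dotProduct, mul_comm] using
      orthonormal_iff_ite.mp hA.eigenvectorBasis.orthonormal p q
  simp only [mulVec_add, mulVec_smul, hA.mulVec_eigenvectorBasis, add_dotProduct, dotProduct_add,
    smul_dotProduct, dotProduct_smul, smul_eq_mul, horth, if_neg hij, if_neg hij.symm, if_pos]
  ring

lemma IsHermitian.subsingleton_setOf_eigenvalues_neg (hA : A.IsHermitian) (k : ι)
    (hk : (A.submatrix (Subtype.val : {j // j ≠ k} → ι) Subtype.val).PosSemidef) :
    {i | hA.eigenvalues i < 0}.Subsingleton := by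
  intro i (hi : hA.eigenvalues i < 0) j (hj : hA.eigenvalues j < 0)
  by_contra hij
  set u := ⇑(hA.eigenvectorBasis i)
  set v := ⇑(hA.eigenvectorBasis j)
  have hform (a b : ℝ) (hab : a * u k + b * v k = 0) :
      0 ≤ a ^ 2 * hA.eigenvalues i + b ^ 2 * hA.eigenvalues j := by
    rw [← hA.dotProduct_mulVec_smul_add_smul_eigenvectorBasis hij a b]
    simpa using dotProduct_mulVec_nonneg_of_posSemidef_submatrix hk
      (x := a • u + b • v) fun l hl => by simpa [not_not.mp hl] using hab
  by_cases huk : u k = 0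
  · linarith [hform 1 0 (by simp [huk])]
  · have hcombo := hform (-v k) (u k) (by ring)
    have : 0 < u k ^ 2 := by positivity
    nlinarith [sq_nonneg (v k)]

lemma IsHermitian.exists_eigenvalues_neg_of_det_neg (hA : A.IsHermitian) (hdet : A.det < 0) :
    ∃ i, hA.eigenvalues i < 0 := by
  by_contra! h
  rw [hA.det_eq_prod_eigenvalues] at hdet
  exact hdet.not_ge (by exact_mod_cast Finset.prod_nonneg fun i _ => h i)

end Matrix

theorem one_negative_eigenvalue_of_locally_psd_general
    (n : ℕ) (A : Matrix (Fin n) (Fin n) ℝ) (hA : A.IsHermitian)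
    (hloc : ∀ i : Fin n,
      (A.submatrix (fun j : {j : Fin n // j ≠ i} => (j : Fin n))
        (fun j : {j : Fin n // j ≠ i} => (j : Fin n))).PosSemidef)
    (hdet : A.det < 0) :
    ∃ i₀ : Fin n, hA.eigenvalues i₀ < 0 ∧ ∀ i : Fin n, i ≠ i₀ → 0 ≤ hA.eigenvalues i := by
  obtain ⟨i₀, hi₀⟩ := hA.exists_eigenvalues_neg_of_det_neg hdet
  exact ⟨i₀, hi₀, fun i hi => not_lt.mp fun hneg =>
    hi ((hA.subsingleton_setOf_eigenvalues_neg i₀ (hloc i₀)) hneg hi₀)⟩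

/-- A matrix whose principal submatrices of size `n-1` are all PSD and whose determinant is
negative has exactly one negative eigenvalue; all other eigenvalues are nonnegative. -/
theorem one_negative_eigenvalue_of_locally_psd
    (n : ℕ) (hn : 2 ≤ n) (A : Matrix (Fin n) (Fin n) ℝ) (hA : A.IsHermitian)
    (hloc : ∀ i : Fin n,
      (A.submatrix (fun j : {j : Fin n // j ≠ i} => (j : Fin n))
        (fun j : {j : Fin n // j ≠ i} => (j : Fin n))).PosSemidef)
    (hdet : A.det < 0) :
    ∃ i₀ : Fin n, hA.eigenvalues i₀ < 0 ∧ ∀ i : Fin n, i ≠ i₀ → 0 ≤ hA.eigenvalues i :=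
  one_negative_eigenvalue_of_locally_psd_general n A hA hloc hdet
end

section
/- Let n ≥ 3 and let A be an n×n real symmetric matrix with all diagonal entries equal to 1, such that every (n−1)×(n−1) principal submatrix of A is positive definite and det(A) < 0. Then the smallest eigenvalue of A satisfies λ_min(A) > −1/(n−2). -/
/-!
Write `λ₁, …, λₙ` for the eigenvalues. Two eigenvectors with eigenvalues `≤ 0` span a plane meeting
every coordinate hyperplane `xₖ = 0` nontrivially, where the quadratic form is positive by the
positive definiteness of the principal minors; so at most one eigenvalue is `≤ 0`. Since
`∏ λᵢ = det A < 0` and `∑ᵢ ∏_{j ≠ i} λⱼ = tr (adj A) > 0` (its terms are principal minors), we get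
`∑ 1/λᵢ < 0`: exactly one eigenvalue `λ₁ = -μ` is negative and `∑_{i ≥ 2} 1/λᵢ < 1/μ`. With
`∑_{i ≥ 2} λᵢ = n + μ`, Cauchy–Schwarz gives `(n - 1)² < (n + μ)/μ`, i.e. `μ (n - 2) < 1`.
-/

open Matrix Finset

lemma Finset.sum_prod_erase_eq_prod_mul_sum_inv {ι K : Type*} [DecidableEq ι] [Field K]
    (s : Finset ι) {f : ι → K} (hf : ∀ i ∈ s, f i ≠ 0) :
    ∑ i ∈ s, ∏ j ∈ s.erase i, f j = (∏ i ∈ s, f i) * ∑ i ∈ s, (f i)⁻¹ := by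
  rw [mul_sum]
  refine sum_congr rfl fun i hi => ?_
  rw [← mul_prod_erase s f hi, mul_comm, inv_mul_cancel_left₀ (hf i hi)]

lemma Fintype.sum_subtype_ne_eq_sum {ι M : Type*} [Fintype ι] [DecidableEq ι] [AddCommMonoid M]
    {k : ι} {f : ι → M} (hf : f k = 0) :
    ∑ j : {j : ι // j ≠ k}, f j = ∑ j, f j :=
  (sum_subtype (univ.erase k) (by simp) f).symm.trans (sum_erase univ hf)

lemma neg_mul_card_sub_two_lt_one {ι : Type*} [Fintype ι] [DecidableEq ι] {x : ι → ℝ} {i₀ : ι}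
    (hpos : ∀ j ≠ i₀, 0 < x j) (hsum : ∑ i, x i = Fintype.card ι)
    (hinv : ∑ i, (x i)⁻¹ < 0) :
    -x i₀ * ((Fintype.card ι : ℝ) - 2) < 1 := by
  set n : ℝ := (Fintype.card ι : ℝ)
  set S := univ.erase i₀
  have hS : ∀ j ∈ S, 0 < x j := fun j hj => hpos j (ne_of_mem_erase hj)
  set T := ∑ j ∈ S, (x j)⁻¹
  have hT : 0 ≤ T := sum_nonneg fun j hj => (inv_pos.mpr (hS j hj)).le
  have hinv' : (x i₀)⁻¹ + T < 0 :=
    (add_sum_erase univ (fun i => (x i)⁻¹) (mem_univ i₀)).trans_lt hinv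
  have hneg : x i₀ < 0 := inv_lt_zero.mp (by linarith)
  have hsum' : x i₀ + ∑ j ∈ S, x j = n := (add_sum_erase univ x (mem_univ i₀)).trans hsum
  have hcard : (#S : ℝ) = n - 1 := by
    rw [card_erase_of_mem (mem_univ i₀), Nat.cast_sub (card_pos.mpr ⟨i₀, mem_univ _⟩)]
    simp [n]
  have hCS : (n - 1) ^ 2 ≤ (∑ j ∈ S, x j) * T := by
    simpa [hcard] using sum_sq_le_sum_mul_sum_of_sq_le_mul S (r := 1)
      (fun j hj => (hS j hj).le) (fun j hj => (inv_pos.mpr (hS j hj)).le)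
      (fun j hj => by rw [mul_inv_cancel₀ (hS j hj).ne']; simp)
  have hT' : -x i₀ * T < 1 := by
    have := mul_lt_mul_of_neg_left hinv' hneg
    rw [mul_add, mul_inv_cancel₀ hneg.ne] at this
    linarith
  have hkey : -x i₀ * (n - 1) ^ 2 < n - x i₀ := by
    calc -x i₀ * (n - 1) ^ 2 ≤ -x i₀ * ((∑ j ∈ S, x j) * T) := by gcongr; linarith
      _ = (∑ j ∈ S, x j) * (-x i₀ * T) := by ring
      _ < ∑ j ∈ S, x j := mul_lt_of_lt_one_right (by linarith) hT'
      _ = n - x i₀ := by linarith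
  have hn : 0 < n := by linarith
  nlinarith

lemma neg_one_div_card_sub_two_lt {ι : Type*} [Fintype ι] {x : ι → ℝ}
    (hcard : 2 < Fintype.card ι) (hsum : ∑ i, x i = Fintype.card ι)
    (hinv : ∑ i, (x i)⁻¹ < 0) (huniq : ∀ i j, x i ≤ 0 → x j ≤ 0 → i = j) (i : ι) :
    -(1 / ((Fintype.card ι : ℝ) - 2)) < x i := by
  classical
  obtain ⟨i₀, -, hi₀⟩ := exists_lt_of_sum_lt (hinv.trans_eq sum_const_zero.symm)
  have hpos : ∀ j ≠ i₀, 0 < x j := fun j hj =>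
    lt_of_not_ge fun h => hj (huniq j i₀ h (inv_lt_zero.mp hi₀).le)
  have hcard' : (0 : ℝ) < Fintype.card ι - 2 := sub_pos.mpr (by exact_mod_cast hcard)
  by_cases hi : i = i₀
  · subst hi
    exact neg_lt.mpr ((lt_div_iff₀ hcard').mpr (neg_mul_card_sub_two_lt_one hpos hsum hinv))
  · exact (neg_neg_of_pos (one_div_pos.mpr hcard')).trans (hpos i hi)

namespace Matrix

lemma adjugate_apply_self {R : Type*} [CommRing R] {n : ℕ} (A : Matrix (Fin n) (Fin n) R)
    (i : Fin n) :
    adjugate A i i = (A.submatrix (fun j : {j : Fin n // j ≠ i} => (j : Fin n))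
      (fun j : {j : Fin n // j ≠ i} => (j : Fin n))).det := by
  obtain ⟨m, rfl⟩ : ∃ m, n = m + 1 := Nat.exists_eq_add_one_of_ne_zero i.pos.ne'
  rw [adjugate_fin_succ_eq_det_submatrix, ← two_mul, pow_mul, neg_one_sq, one_pow, one_mul,
    ← det_submatrix_equiv_self (finSuccAboveEquiv i)]
  rfl

lemma IsHermitian.trace_adjugate {ι 𝕜 : Type*} [Fintype ι] [DecidableEq ι] [RCLike 𝕜]
    {A : Matrix ι ι 𝕜} (hA : A.IsHermitian) :
    A.adjugate.trace = ∑ i, ∏ j ∈ univ.erase i, (hA.eigenvalues j : 𝕜) := by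
  conv_lhs => rw [hA.spectral_theorem]
  rw [Unitary.conjStarAlgAut_apply, adjugate_mul_distrib, adjugate_mul_distrib, ← mul_assoc,
    trace_mul_cycle, ← adjugate_mul_distrib, Unitary.coe_star_mul_self, adjugate_one, one_mul,
    adjugate_diagonal, trace_diagonal]
  simp

variable {ι : Type*} [Fintype ι] [DecidableEq ι]

lemma dotProduct_mulVec_pos_of_posDef_submatrix_ne {A : Matrix ι ι ℝ} {k : ι}
    (hA : (A.submatrix (fun j : {j : ι // j ≠ k} => (j : ι))
      (fun j : {j : ι // j ≠ k} => (j : ι))).PosDef)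
    {x : ι → ℝ} (hx : x ≠ 0) (hxk : x k = 0) : 0 < x ⬝ᵥ A *ᵥ x := by
  set y : {j : ι // j ≠ k} → ℝ := fun j => x j
  have hy : y ≠ 0 := by
    contrapose! hx
    funext j
    by_cases hj : j = k
    · rw [hj, hxk]; rfl
    · exact congrFun hx ⟨j, hj⟩
  have h := hA.dotProduct_mulVec_pos hy
  simp only [star_trivial, dotProduct, mulVec, submatrix_apply] at h ⊢
  simpa only [y,
    fun i => Fintype.sum_subtype_ne_eq_sum (k := k) (f := fun j => A i j * x j) (by simp [hxk]),
    Fintype.sum_subtype_ne_eq_sum (k := k) (f := fun i => x i * ∑ j, A i j * x j) (by simp [hxk])]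
    using h

namespace IsHermitian

variable {A : Matrix ι ι ℝ} (hA : A.IsHermitian)

lemma eigenvectorBasis_dotProduct (i j : ι) :
    ⇑(hA.eigenvectorBasis i) ⬝ᵥ ⇑(hA.eigenvectorBasis j) = if i = j then 1 else 0 := by
  simpa [EuclideanSpace.inner_eq_star_dotProduct, dotProduct_comm] using
    orthonormal_iff_ite.mp hA.eigenvectorBasis.orthonormal i j

lemma dotProduct_mulVec_smul_eigenvectorBasis_add {i j : ι} (hij : i ≠ j) (a b : ℝ) :
    (a • ⇑(hA.eigenvectorBasis i) + b • ⇑(hA.eigenvectorBasis j)) ⬝ᵥ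
      A *ᵥ (a • ⇑(hA.eigenvectorBasis i) + b • ⇑(hA.eigenvectorBasis j)) =
      a ^ 2 * hA.eigenvalues i + b ^ 2 * hA.eigenvalues j := by
  simp only [mulVec_add, mulVec_smul, mulVec_eigenvectorBasis, dotProduct_add, dotProduct_smul,
    add_dotProduct, smul_dotProduct, eigenvectorBasis_dotProduct, if_pos, if_neg hij,
    if_neg hij.symm, smul_eq_mul, mul_one, mul_zero, add_zero, zero_add]
  ring

lemma eq_of_eigenvalues_nonpos {k : ι}
    (hk : (A.submatrix (fun j : {j : ι // j ≠ k} => (j : ι))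
      (fun j : {j : ι // j ≠ k} => (j : ι))).PosDef)
    {i j : ι} (hi : hA.eigenvalues i ≤ 0) (hj : hA.eigenvalues j ≤ 0) : i = j := by
  by_contra hij
  -- a nonzero `a • u + b • v` with `k`-th coordinate zero has a form value both `≤ 0` and `> 0`
  set u := ⇑(hA.eigenvectorBasis i)
  set v := ⇑(hA.eigenvectorBasis j)
  have key : ∀ a b : ℝ, a ≠ 0 ∨ b ≠ 0 → a * u k + b * v k = 0 → False := by
    intro a b hab habk
    have hx : a • u + b • v ≠ 0 := by
      intro hx
      have hu := congrArg (u ⬝ᵥ ·) hx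
      have hv := congrArg (v ⬝ᵥ ·) hx
      simp only [u, v, dotProduct_add, dotProduct_smul, eigenvectorBasis_dotProduct, if_pos,
        if_neg hij, if_neg (Ne.symm hij), smul_eq_mul, mul_one, mul_zero, add_zero, zero_add,
        dotProduct_zero] at hu hv
      tauto
    have hpos := dotProduct_mulVec_pos_of_posDef_submatrix_ne hk hx (by simpa using habk)
    rw [dotProduct_mulVec_smul_eigenvectorBasis_add hA hij] at hpos
    nlinarith [sq_nonneg a, sq_nonneg b]
  by_cases hu : u k = 0
  · exact key 1 0 (by simp) (by simp [hu])
  · exact key (v k) (-u k) (Or.inr (neg_ne_zero.mpr hu)) (by ring)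

end IsHermitian

end Matrix

/-- Lower bound on the smallest eigenvalue: every eigenvalue is greater than `-1/(n-2)`. -/
theorem eigenvalue_lower_bound
    (n : ℕ) (hn : 3 ≤ n) (A : Matrix (Fin n) (Fin n) ℝ) (hA : A.IsHermitian)
    (hdiag : ∀ i : Fin n, A i i = 1)
    (hloc : ∀ i : Fin n,
      (A.submatrix (fun j : {j : Fin n // j ≠ i} => (j : Fin n))
        (fun j : {j : Fin n // j ≠ i} => (j : Fin n))).PosDef)
    (hdet : A.det < 0) :
    ∀ i : Fin n, -(1 / ((n : ℝ) - 2)) < hA.eigenvalues i := by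
  have hprod : ∏ i, hA.eigenvalues i < 0 := by simpa [hA.det_eq_prod_eigenvalues] using hdet
  have hne : ∀ i ∈ univ, hA.eigenvalues i ≠ 0 := prod_ne_zero_iff.mp hprod.ne
  have htrace : ∑ i, hA.eigenvalues i = n := by
    simpa [trace, hdiag] using hA.trace_eq_sum_eigenvalues.symm
  have hinv : ∑ i, (hA.eigenvalues i)⁻¹ < 0 := by
    have hadj : 0 < A.adjugate.trace := sum_pos (fun i _ => by
      rw [diag_apply, adjugate_apply_self]; exact (hloc i).det_pos) ⟨⟨0, by omega⟩, mem_univ _⟩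
    rw [hA.trace_adjugate] at hadj
    simp only [RCLike.ofReal_real_eq_id, id_eq] at hadj
    rw [sum_prod_erase_eq_prod_mul_sum_inv _ hne] at hadj
    exact neg_of_mul_pos_right hadj hprod.le
  simpa using neg_one_div_card_sub_two_lt (by simpa) (by simpa) hinv
    fun i j => hA.eq_of_eigenvalues_nonpos (hloc i)
end

section
/- Let n ≥ 3 and let A be an n×n real symmetric matrix with all diagonal entries equal to 1, such that every (n−1)×(n−1) principal submatrix of A is positive definite and det(A) < 0. Then det(A) > −(1/(n−2))·((n−1)/(n−2))^(n−1). -/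
/-!
Let `μ₁, …, μₙ` be the eigenvalues of `A`. They sum to `tr A = n`, and their reciprocals sum to
`tr A⁻¹ = ∑ᵢ det Aᵢ / det A < 0`, where the `Aᵢ` are the positive definite principal minors.
Positivity of the form on each hyperplane `xₖ = 0` leaves room for at most one nonpositive
eigenvalue, so exactly one eigenvalue `-s` is negative. Cauchy–Schwarz on the remaining `n - 1`
gives `(n - 1)² < (n + s) / s`, i.e. `s < 1 / (n - 2)`, and AM–GM bounds their product by
`((n + s) / (n - 1)) ^ (n - 1) < ((n - 1) / (n - 2)) ^ (n - 1)`.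
-/

open Matrix Finset

namespace Matrix

variable {ι : Type*} [Fintype ι] [DecidableEq ι]

theorem dotProduct_mulVec_pos_of_apply_eq_zero {R : Type*} [CommRing R] [PartialOrder R]
    [StarRing R] {A : Matrix ι ι R} {i : ι}
    (hA : (A.submatrix (Subtype.val : {j // j ≠ i} → ι) Subtype.val).PosDef)
    {x : ι → R} (hxi : x i = 0) (hx : x ≠ 0) : 0 < star x ⬝ᵥ A *ᵥ x := by
  have hx' : (fun j : {j // j ≠ i} => x j) ≠ 0 := by
    contrapose! hx
    ext j
    by_cases h : j = i
    · simp [h, hxi]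
    · exact congrFun hx ⟨j, h⟩
  convert hA.dotProduct_mulVec_pos hx' using 1
  simp [dotProduct, mulVec, Fintype.sum_eq_add_sum_subtype_ne _ i, hxi]

theorem adjugate_apply_self_eq_det_submatrix {R : Type*} [CommRing R] {n : ℕ}
    (A : Matrix (Fin n) (Fin n) R) (i : Fin n) :
    adjugate A i i = (A.submatrix (Subtype.val : {j // j ≠ i} → Fin n) Subtype.val).det := by
  cases n with
  | zero => exact i.elim0
  | succ m =>
    rw [adjugate_fin_succ_eq_det_submatrix, ← det_submatrix_equiv_self (finSuccAboveEquiv i)]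
    simp [Function.comp_def, finSuccAboveEquiv_apply]

theorem inv_apply_self_neg_of_det_neg {n : ℕ} {A : Matrix (Fin n) (Fin n) ℝ} {i : Fin n}
    (hA : (A.submatrix (Subtype.val : {j // j ≠ i} → Fin n) Subtype.val).PosDef)
    (hdet : A.det < 0) : A⁻¹ i i < 0 := by
  rw [inv_def, smul_apply, adjugate_apply_self_eq_det_submatrix, Ring.inverse_eq_inv', smul_eq_mul]
  exact mul_neg_of_neg_of_pos (inv_lt_zero.mpr hdet) hA.det_pos

theorem IsHermitian.trace_inv_eq_sum_inv_eigenvalues {𝕜 : Type*} [RCLike 𝕜]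
    {A : Matrix ι ι 𝕜} (hA : A.IsHermitian) (hdet : A.det ≠ 0) :
    A⁻¹.trace = ∑ i, (hA.eigenvalues i : 𝕜)⁻¹ := by
  set U : Matrix ι ι 𝕜 := (hA.eigenvectorUnitary : Matrix ι ι 𝕜)
  set d : ι → 𝕜 := RCLike.ofReal ∘ hA.eigenvalues
  have hd : ∀ i, d i ≠ 0 := fun i hi =>
    hdet (by rw [hA.det_eq_prod_eigenvalues]; exact prod_eq_zero (mem_univ i) hi)
  have hDinv : (diagonal d)⁻¹ = diagonal d⁻¹ :=
    inv_eq_left_inv (by simp [diagonal_mul_diagonal, inv_mul_cancel₀ (hd _)])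
  calc A⁻¹.trace = ((star U)⁻¹ * (diagonal d)⁻¹ * U⁻¹).trace := by
        rw [hA.spectral_theorem, Unitary.conjStarAlgAut_apply, mul_inv_rev, mul_inv_rev,
          mul_assoc]
    _ = ((diagonal d)⁻¹ * (star U * U)⁻¹).trace := by
        rw [mul_assoc, trace_mul_comm, mul_assoc, mul_inv_rev]
    _ = ∑ i, (d i)⁻¹ := by
        rw [Unitary.coe_star_mul_self, inv_one, mul_one, hDinv, trace_diagonal]; rfl

theorem IsHermitian.eigenvalues_pos_of_ne {A : Matrix ι ι ℝ} (hA : A.IsHermitian) {k : ι}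
    (hk : (A.submatrix (Subtype.val : {j // j ≠ k} → ι) Subtype.val).PosDef) {i j : ι}
    (hij : i ≠ j) (hi : hA.eigenvalues i ≤ 0) : 0 < hA.eigenvalues j := by
  by_contra! hj
  -- The form is `≤ 0` on the span of the `i`th and `j`th eigenvectors, which meets `x k = 0`.
  set b := hA.eigenvectorBasis
  obtain ⟨α, β, hαβ, hxk⟩ :
      ∃ α β : ℝ, (α ≠ 0 ∨ β ≠ 0) ∧ α * b i k + β * b j k = 0 := by
    by_cases h : b i k = 0
    · exact ⟨1, 0, by simp, by simp [h]⟩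
    · exact ⟨b j k, -b i k, by simp [h], by ring⟩
  set x := α • b i + β • b j
  have hbx : ∀ a, inner ℝ x (b a) = (if a = i then α else 0) + (if a = j then β else 0) := by
    intro a
    simp [x, inner_add_left, inner_smul_left, OrthonormalBasis.inner_eq_ite, eq_comm]
  have hx : WithLp.ofLp x ≠ 0 := by
    intro h0
    have hx0 : x = 0 := by simpa using h0
    have hαi := hbx i
    have hβj := hbx j
    simp only [hx0, inner_zero_left, ↓reduceIte, hij, hij.symm, add_zero, zero_add] at hαi hβj
    exact hαβ.elim (· hαi.symm) (· hβj.symm)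
  have hq : star (WithLp.ofLp x) ⬝ᵥ A *ᵥ WithLp.ofLp x
      = α ^ 2 * hA.eigenvalues i + β ^ 2 * hA.eigenvalues j := by
    have hAx : A *ᵥ WithLp.ofLp x
        = (α * hA.eigenvalues i) • WithLp.ofLp (b i)
          + (β * hA.eigenvalues j) • WithLp.ofLp (b j) := by
      simp [x, mulVec_add, mulVec_smul, b, hA.mulVec_eigenvectorBasis, smul_smul]
    have hdot : ∀ a, star (WithLp.ofLp x) ⬝ᵥ WithLp.ofLp (b a) = inner ℝ x (b a) := by
      intro a
      simp [EuclideanSpace.inner_eq_star_dotProduct, dotProduct_comm]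
    rw [hAx, dotProduct_add, dotProduct_smul, dotProduct_smul, hdot, hdot, hbx, hbx]
    simp only [↓reduceIte, hij, hij.symm, add_zero, zero_add, smul_eq_mul]
    ring
  have hxpos := dotProduct_mulVec_pos_of_apply_eq_zero hk (x := WithLp.ofLp x)
    (by simpa [x] using hxk) hx
  rw [hq] at hxpos
  nlinarith [mul_nonneg (sq_nonneg α) (neg_nonneg.mpr hi),
    mul_nonneg (sq_nonneg β) (neg_nonneg.mpr hj)]

end Matrix

theorem Real.prod_le_sum_div_card_pow {ι : Type*} (s : Finset ι) {f : ι → ℝ}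
    (hf : ∀ i ∈ s, 0 ≤ f i) : ∏ i ∈ s, f i ≤ ((∑ i ∈ s, f i) / #s) ^ #s := by
  rcases s.eq_empty_or_nonempty with rfl | hs
  · simp
  have hcard : (0 : ℝ) < #s := by exact_mod_cast hs.card_pos
  have hmean := Real.geom_mean_le_arith_mean_weighted s (fun _ => (#s : ℝ)⁻¹) f
    (fun _ _ => by positivity) (by simp [hcard.ne']) hf
  rw [Real.finsetProd_rpow s f hf, ← mul_sum, inv_mul_eq_div] at hmean
  calc ∏ i ∈ s, f i = ((∏ i ∈ s, f i) ^ (#s : ℝ)⁻¹) ^ #s :=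
        (Real.rpow_inv_natCast_pow (prod_nonneg hf) hs.card_pos.ne').symm
    _ ≤ ((∑ i ∈ s, f i) / #s) ^ #s :=
        pow_le_pow_left₀ (Real.rpow_nonneg (prod_nonneg hf) _) hmean _

theorem mul_card_sub_one_lt_one_of_sum_inv_lt_inv {ι : Type*} (T : Finset ι) {f : ι → ℝ}
    (hf : ∀ j ∈ T, 0 < f j) {s : ℝ} (hs : 0 < s) (hsum : ∑ j ∈ T, f j = #T + 1 + s)
    (hinv : ∑ j ∈ T, (f j)⁻¹ < s⁻¹) : s * (#T - 1) < 1 := by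
  have hcs : (#T : ℝ) ^ 2 ≤ (∑ j ∈ T, f j) * ∑ j ∈ T, (f j)⁻¹ := by
    simpa using sum_sq_le_sum_mul_sum_of_sq_le_mul T (r := fun _ => (1 : ℝ))
      (fun j hj => (hf j hj).le) (fun j hj => (inv_pos.mpr (hf j hj)).le)
      (fun j hj => by rw [one_pow, mul_inv_cancel₀ (hf j hj).ne'])
  have hlt : (#T : ℝ) ^ 2 * s < #T + 1 + s := by
    have hpos : 0 < ∑ j ∈ T, f j := hsum ▸ by positivity
    calc (#T : ℝ) ^ 2 * s ≤ (∑ j ∈ T, f j) * (∑ j ∈ T, (f j)⁻¹) * s := by gcongr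
      _ < (∑ j ∈ T, f j) * s⁻¹ * s := by gcongr
      _ = #T + 1 + s := by rw [mul_assoc, inv_mul_cancel₀ hs.ne', mul_one, hsum]
  nlinarith [(#T).cast_nonneg (α := ℝ)]

theorem lt_prod_of_sum_eq_card_of_sum_inv_neg {ι : Type*} [Fintype ι] [DecidableEq ι] {n : ℕ}
    (hn : 3 ≤ n) (hcard : Fintype.card ι = n) {μ : ι → ℝ} {i₀ : ι} (hneg : μ i₀ < 0)
    (hpos : ∀ j ≠ i₀, 0 < μ j) (hsum : ∑ i, μ i = n) (hinv : ∑ i, (μ i)⁻¹ < 0) :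
    -(1 / ((n : ℝ) - 2)) * (((n : ℝ) - 1) / ((n : ℝ) - 2)) ^ (n - 1) < ∏ i, μ i := by
  have hnR : (3 : ℝ) ≤ n := by exact_mod_cast hn
  set T := univ.erase i₀
  set s := -μ i₀ with hs_def
  have hs : 0 < s := neg_pos.mpr hneg
  have hTpos : ∀ j ∈ T, 0 < μ j := fun j hj => hpos j (ne_of_mem_erase hj)
  have hT : #T = n - 1 := by rw [card_erase_of_mem (mem_univ _), card_univ, hcard]
  have hTR : (#T : ℝ) = n - 1 := by rw [hT, Nat.cast_sub (by omega), Nat.cast_one]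
  have hsumT : ∑ j ∈ T, μ j = #T + 1 + s := by
    linarith [add_sum_erase univ μ (mem_univ i₀)]
  have hinvT : ∑ j ∈ T, (μ j)⁻¹ < s⁻¹ := by
    linarith [add_sum_erase univ (fun i => (μ i)⁻¹) (mem_univ i₀), inv_neg (a := μ i₀)]
  have hsm := mul_card_sub_one_lt_one_of_sum_inv_lt_inv T hTpos hs hsumT hinvT
  rw [hTR] at hsm
  have hs_lt : s < 1 / (n - 2) := by
    rw [lt_div_iff₀ (by linarith)]
    linarith
  have hmean : (∑ j ∈ T, μ j) / #T < (n - 1) / (n - 2) := by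
    rw [hsumT, hTR, div_lt_div_iff₀ (by linarith) (by linarith)]
    nlinarith
  calc -(1 / ((n : ℝ) - 2)) * (((n : ℝ) - 1) / ((n : ℝ) - 2)) ^ (n - 1)
      < -(s * ((∑ j ∈ T, μ j) / #T) ^ #T) := by
        rw [neg_mul, neg_lt_neg_iff, ← hT]
        have hmean_nonneg : 0 ≤ (∑ j ∈ T, μ j) / #T :=
          div_nonneg (sum_nonneg fun j hj => (hTpos j hj).le) (Nat.cast_nonneg _)
        exact mul_lt_mul'' hs_lt (pow_lt_pow_left₀ hmean hmean_nonneg (by omega)) hs.le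
          (pow_nonneg hmean_nonneg _)
    _ ≤ -(s * ∏ j ∈ T, μ j) := by
        gcongr
        exact Real.prod_le_sum_div_card_pow T fun j hj => (hTpos j hj).le
    _ = ∏ i, μ i := by rw [← mul_prod_erase univ μ (mem_univ i₀), hs_def, neg_mul, neg_neg]

/-- Determinant lower bound for unit-diagonal `(n-1)`-locally positive definite matrices. -/
theorem det_lower_bound_unit_diagonal
    (n : ℕ) (hn : 3 ≤ n) (A : Matrix (Fin n) (Fin n) ℝ) (hA : A.IsHermitian)
    (hdiag : ∀ i : Fin n, A i i = 1)
    (hloc : ∀ i : Fin n,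
      (A.submatrix (fun j : {j : Fin n // j ≠ i} => (j : Fin n))
        (fun j : {j : Fin n // j ≠ i} => (j : Fin n))).PosDef)
    (hdet : A.det < 0) :
    A.det > -(1 / ((n : ℝ) - 2)) * (((n : ℝ) - 1) / ((n : ℝ) - 2)) ^ (n - 1) := by
  set μ := hA.eigenvalues
  have hdet_eq : A.det = ∏ i, μ i := by simpa using hA.det_eq_prod_eigenvalues
  have htrace : ∑ i, μ i = n := by simpa [trace, hdiag] using hA.trace_eq_sum_eigenvalues.symm
  have hinv : ∑ i, (μ i)⁻¹ < 0 :=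
    calc ∑ i, (μ i)⁻¹ = A⁻¹.trace := by
          simpa using (hA.trace_inv_eq_sum_inv_eigenvalues hdet.ne).symm
      _ < 0 := sum_neg (fun i _ => inv_apply_self_neg_of_det_neg (hloc i) hdet)
          ⟨⟨0, by omega⟩, mem_univ _⟩
  obtain ⟨i₀, hi₀⟩ : ∃ i, μ i < 0 := by
    by_contra! h
    exact hdet.not_ge (hdet_eq ▸ prod_nonneg fun i _ => h i)
  have hpos : ∀ j ≠ i₀, 0 < μ j := fun j hj =>
    hA.eigenvalues_pos_of_ne (hloc i₀) hj.symm hi₀.le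
  rw [hdet_eq]
  exact lt_prod_of_sum_eq_card_of_sum_inv_neg hn (Fintype.card_fin n) hi₀ hpos htrace hinv
end

section
/- For n ≥ 3, let A be the n×n matrix with a_{ii} = 1 and a_{ij} = −1/(n−2) for i ≠ j. Then every (n−1)×(n−1) principal submatrix of A is positive semidefinite, and det(A) = −(1/(n−2))·((n−1)/(n−2))^(n−1). In particular, the constant in the extended Hadamard inequality is sharp. -/
/-!
With `r = -1/(n-2)` the matrix is `(1 - r) I + r J`. Its quadratic form is
`(1 - r) ‖x‖² + r (∑ xᵢ)²`; for `r ≤ 0` Cauchy–Schwarz `(∑ xᵢ)² ≤ m ‖x‖²` bounds it below by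
`(1 + (m - 1) r) ‖x‖²`, which vanishes for the principal `(n-1)×(n-1)` submatrices (`m = n - 1`),
so they are positive semidefinite. The matrix determinant lemma gives
`det = (1 - r)^(n-1) (1 + (n-1) r)`, and `1 + (n-1) r = r`.
-/

open Matrix Finset

namespace Matrix

variable {ι κ R : Type*} [DecidableEq ι]

def equicorrelation [One R] (r : R) : Matrix ι ι R :=
  of fun i j => if i = j then 1 else r

lemma equicorrelation_submatrix [One R] [DecidableEq κ] (r : R) {f : κ → ι}
    (hf : Function.Injective f) : (equicorrelation r).submatrix f f = equicorrelation r := by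
  ext a b
  simp [equicorrelation, hf.eq_iff]

lemma isHermitian_equicorrelation [One R] [Star R] [TrivialStar R] (r : R) :
    (equicorrelation r : Matrix ι ι R).IsHermitian := by
  ext i j
  simp [equicorrelation, eq_comm]

variable [Fintype ι]

lemma equicorrelation_mulVec [CommRing R] (r : R) (x : ι → R) (i : ι) :
    (equicorrelation r *ᵥ x) i = (1 - r) * x i + r * ∑ j, x j := by
  have hentry : ∀ j, (if i = j then 1 else r) = (1 - r) * (if i = j then 1 else 0) + r := by
    intro j; split_ifs <;> ring
  simp only [equicorrelation, mulVec, dotProduct, of_apply, hentry, add_mul, sum_add_distrib,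
    mul_assoc, ← mul_sum, ite_mul, one_mul, zero_mul, sum_ite_eq, mem_univ, if_true]

lemma dotProduct_equicorrelation_mulVec [CommRing R] (r : R) (x : ι → R) :
    x ⬝ᵥ (equicorrelation r *ᵥ x) = (1 - r) * ∑ i, x i ^ 2 + r * (∑ i, x i) ^ 2 := by
  simp only [dotProduct, equicorrelation_mulVec, mul_add, sum_add_distrib]
  simp only [mul_left_comm (x _), ← mul_sum, ← sum_mul, sq]

lemma posSemidef_equicorrelation {r : ℝ} (h₁ : r ≤ 1)
    (h₂ : 0 ≤ 1 + (Fintype.card ι - 1) * r) : (equicorrelation r : Matrix ι ι ℝ).PosSemidef := by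
  refine posSemidef_iff_dotProduct_mulVec.2 ⟨isHermitian_equicorrelation r, fun x => ?_⟩
  rw [star_trivial, dotProduct_equicorrelation_mulVec]
  have hS : 0 ≤ ∑ i, x i ^ 2 := sum_nonneg fun i _ => sq_nonneg (x i)
  have hCS : (∑ i, x i) ^ 2 ≤ Fintype.card ι * ∑ i, x i ^ 2 := by
    simpa using sq_sum_le_card_mul_sum_sq (s := univ) (f := x)
  rcases le_total 0 r with hr | hr
  · nlinarith [sq_nonneg (∑ i, x i)]
  · nlinarith

lemma det_equicorrelation [Field R] [Nonempty ι] {r : R} (hr : r ≠ 1) :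
    (equicorrelation r : Matrix ι ι R).det =
      (1 - r) ^ (Fintype.card ι - 1) * (1 + (Fintype.card ι - 1) * r) := by
  have hr' : 1 - r ≠ 0 := sub_ne_zero.2 hr.symm
  have hfactor : (equicorrelation r : Matrix ι ι R) =
      (1 - r) • (1 + replicateCol Unit (fun _ : ι => r / (1 - r)) *
        replicateRow Unit (fun _ : ι => (1 : R))) := by
    ext i j
    by_cases hij : i = j
    · simp [equicorrelation, hij, mul_apply]
      field_simp
      ring
    · simp [equicorrelation, hij, mul_apply]
      field_simp
  obtain ⟨m, hm⟩ : ∃ m, Fintype.card ι = m + 1 := Nat.exists_eq_add_one.2 Fintype.card_pos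
  rw [hfactor, det_smul, det_one_add_replicateCol_mul_replicateRow, hm]
  simp only [dotProduct, sum_const, card_univ, hm, nsmul_eq_mul, Nat.add_sub_cancel]
  push_cast
  field_simp
  ring

end Matrix

/-- The matrix with unit diagonal and off-diagonal entries `-1/(n-2)` has all
`(n-1)×(n-1)` principal submatrices PSD, and its determinant attains the extended
Hadamard bound. -/
theorem extremal_matrix_extended_hadamard
    (n : ℕ) (hn : 3 ≤ n)
    (A : Matrix (Fin n) (Fin n) ℝ)
    (hAdef : ∀ i j : Fin n, A i j = if i = j then 1 else -(1 / ((n : ℝ) - 2))) :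
    (∀ i : Fin n,
      (A.submatrix (fun j : {j : Fin n // j ≠ i} => (j : Fin n))
        (fun j : {j : Fin n // j ≠ i} => (j : Fin n))).PosSemidef) ∧
    A.det = -(1 / ((n : ℝ) - 2)) * (((n : ℝ) - 1) / ((n : ℝ) - 2)) ^ (n - 1) := by
  obtain rfl : A = equicorrelation (-(1 / ((n : ℝ) - 2))) := ext hAdef
  set r : ℝ := -(1 / ((n : ℝ) - 2)) with hr_def
  have hn' : (2 : ℝ) < n := by exact_mod_cast hn
  have hn2 : (n : ℝ) - 2 ≠ 0 := by linarith
  have hr : r < 0 := neg_neg_of_pos (one_div_pos.2 (by linarith))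
  have hdiag : 1 - r = ((n : ℝ) - 1) / ((n : ℝ) - 2) := by rw [hr_def]; field_simp; ring
  have hsum : 1 + ((n : ℝ) - 2) * r = 0 := by rw [hr_def]; field_simp; ring
  refine ⟨fun i => ?_, ?_⟩
  · rw [equicorrelation_submatrix _ Subtype.val_injective]
    refine posSemidef_equicorrelation (hr.le.trans zero_le_one) (le_of_eq ?_)
    rw [Fintype.card_subtype_compl, Fintype.card_fin, Fintype.card_unique, Nat.cast_pred (by omega),
      ← hsum]
    ring
  · have : Nonempty (Fin n) := ⟨⟨0, by omega⟩⟩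
    rw [det_equicorrelation (by linarith), Fintype.card_fin, hdiag]
    linear_combination (((n : ℝ) - 1) / ((n : ℝ) - 2)) ^ (n - 1) * hsum
end

section
/- Let n ≥ 3 and let A be an n×n real symmetric matrix of block form A = [[B, b],[bᵀ, a_{nn}]], where B is an (n−1)×(n−1) positive semidefinite matrix. Assume det(A) ≤ 0, a_{nn} ≥ 0, and |b_i| ≤ √(a_{ii}·a_{nn}) for i = 1,…,n−1. Then det(A) ≥ −(n−1)·((n−1)/(n−2))^(n−2) · a_{11}·a_{22}···a_{nn}. -/
/-!
Scaling `A` by `diag(√a₁₁, …, √aₙₙ)` to unit diagonal and taking the Schur complement of the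
corner entry gives `det A = a₁₁ ⋯ aₙₙ · det (C - c cᵀ)`, where `C` is the correlation matrix of
`B` (so `tr C = n - 1`) and `|cᵢ| ≤ 1`. In an eigenbasis of `C` this determinant is
`∏ μ - ∑ wᵢ² ∏_{j ≠ i} μⱼ` with `∑ μ = n - 1` and `∑ wᵢ² = ‖c‖² ≤ n - 1`, and AM-GM bounds
every `∏_{j ≠ i} μⱼ` by `((n - 1)/(n - 2))^(n - 2)`. This needs `B` positive definite and
`a > 0`; the semidefinite case follows by replacing `B, a` with `B + ε I, a + ε` and letting
`ε → 0`.
-/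

open Matrix Finset

namespace Real

theorem prod_le_arith_mean_pow_card {ι : Type*} (s : Finset ι) (z : ι → ℝ)
    (hz : ∀ i ∈ s, 0 ≤ z i) :
    ∏ i ∈ s, z i ≤ ((∑ i ∈ s, z i) / #s) ^ #s := by
  rcases s.eq_empty_or_nonempty with rfl | hs
  · simp
  have hcard : (0 : ℝ) < #s := by exact_mod_cast hs.card_pos
  have amgm := geom_mean_le_arith_mean s (fun _ => 1) z (fun _ _ => zero_le_one)
    (by simpa using hcard) hz
  simp only [rpow_one, sum_const, nsmul_eq_mul, mul_one, one_mul] at amgm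
  calc ∏ i ∈ s, z i = ((∏ i ∈ s, z i) ^ (#s : ℝ)⁻¹) ^ #s := by
        rw [← rpow_natCast, ← rpow_mul (prod_nonneg hz), inv_mul_cancel₀ hcard.ne', rpow_one]
    _ ≤ ((∑ i ∈ s, z i) / #s) ^ #s := by gcongr; exact rpow_nonneg (prod_nonneg hz) _

end Real

namespace Matrix

variable {ι : Type*} [Fintype ι] [DecidableEq ι]

noncomputable def borderedDetBound (k : ℕ) : ℝ := k * ((k : ℝ) / (k - 1)) ^ (k - 1)

theorem det_diagonal_sub_vecMulVec {K : Type*} [Field K] {μ : ι → K} (hμ : ∀ i, μ i ≠ 0)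
    (u v : ι → K) :
    (diagonal μ - vecMulVec u v).det = ∏ i, μ i - ∑ i, u i * v i * ∏ j ∈ univ.erase i, μ j := by
  have hfactor : diagonal μ - vecMulVec u v = diagonal μ * (1 + vecMulVec (-(u / μ)) v) := by
    have hu : diagonal μ *ᵥ (u / μ) = u := by
      ext i
      rw [mulVec_diagonal, Pi.div_apply, mul_div_cancel₀ _ (hμ i)]
    rw [mul_add, mul_one, mul_vecMulVec, mulVec_neg, hu, neg_vecMulVec, ← sub_eq_add_neg]
  rw [hfactor, det_mul, det_diagonal, vecMulVec_eq Unit, det_one_add_replicateCol_mul_replicateRow,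
    mul_add, mul_one, sub_eq_add_neg, dotProduct, mul_sum, ← sum_neg_distrib]
  congr 1
  refine sum_congr rfl fun i _ => ?_
  rw [← mul_prod_erase univ μ (mem_univ i)]
  simp only [Pi.neg_apply, Pi.div_apply]
  field_simp [hμ i]

theorem neg_le_det_diagonal_sub_vecMulVec {μ : ι → ℝ} (hμ : ∀ i, 0 < μ i)
    (hμsum : ∑ i, μ i ≤ Fintype.card ι) (w : ι → ℝ) (hw : w ⬝ᵥ w ≤ Fintype.card ι) :
    -borderedDetBound (Fintype.card ι) ≤ (diagonal μ - vecMulVec w w).det := by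
  set k := Fintype.card ι
  set C : ℝ := ((k : ℝ) / (k - 1)) ^ (k - 1)
  have hprod_erase : ∀ i, ∏ j ∈ univ.erase i, μ j ≤ C := by
    intro i
    have hcard : #(univ.erase i) = k - 1 := by rw [card_erase_of_mem (mem_univ i), card_univ]
    have hk : 1 ≤ k := Fintype.card_pos_iff.mpr ⟨i⟩
    calc ∏ j ∈ univ.erase i, μ j
        ≤ ((∑ j ∈ univ.erase i, μ j) / #(univ.erase i)) ^ #(univ.erase i) :=
          Real.prod_le_arith_mean_pow_card _ _ fun j _ => (hμ j).le
      _ ≤ ((k : ℝ) / (k - 1)) ^ (k - 1) := by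
          rw [hcard, Nat.cast_sub hk, Nat.cast_one]
          have hk' : (1 : ℝ) ≤ k := by exact_mod_cast hk
          gcongr
          · exact div_nonneg (sum_nonneg fun j _ => (hμ j).le) (by linarith)
          · exact (sum_le_sum_of_subset_of_nonneg (subset_univ _) fun j _ _ => (hμ j).le).trans hμsum
  have hC : 0 ≤ C := by
    cases isEmpty_or_nonempty ι with
    | inl _ => simp [C, k]
    | inr hι => exact (prod_nonneg fun j _ => (hμ j).le).trans (hprod_erase hι.some)
  have hweighted : ∑ i, w i * w i * ∏ j ∈ univ.erase i, μ j ≤ k * C :=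
    calc ∑ i, w i * w i * ∏ j ∈ univ.erase i, μ j ≤ ∑ i, w i * w i * C :=
          sum_le_sum fun i _ => mul_le_mul_of_nonneg_left (hprod_erase i) (mul_self_nonneg _)
      _ = (w ⬝ᵥ w) * C := by rw [dotProduct, sum_mul]
      _ ≤ k * C := by gcongr
  rw [det_diagonal_sub_vecMulVec fun i => (hμ i).ne', show borderedDetBound k = k * C from rfl]
  linarith [prod_nonneg fun i (_ : i ∈ univ) => (hμ i).le]

theorem IsHermitian.exists_det_sub_vecMulVec_eq {C : Matrix ι ι ℝ} (hC : C.IsHermitian)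
    (v : ι → ℝ) :
    ∃ w : ι → ℝ, w ⬝ᵥ w = v ⬝ᵥ v ∧
      (C - vecMulVec v v).det = (diagonal hC.eigenvalues - vecMulVec w w).det := by
  set U : Matrix ι ι ℝ := (hC.eigenvectorUnitary : Matrix ι ι ℝ)
  have hstar : star U = Uᵀ := by rw [star_eq_conjTranspose, conjTranspose_eq_transpose_of_trivial]
  have hUU : star U * U = 1 := Unitary.coe_star_mul_self _
  have hUU' : U * star U = 1 := Unitary.coe_mul_star_self _
  have hdiag : star U * C * U = diagonal hC.eigenvalues := by
    simpa [RCLike.ofReal_real_eq_id] using hC.conjStarAlgAut_star_eigenvectorUnitary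
  refine ⟨star U *ᵥ v, ?_, ?_⟩
  · rw [dotProduct_mulVec, hstar, vecMul_transpose, mulVec_mulVec, ← hstar, hUU', one_mulVec]
  · calc (C - vecMulVec v v).det = (star U * (C - vecMulVec v v) * U).det := by
          rw [det_mul_right_comm, hUU, one_mul]
      _ = _ := by
          rw [mul_sub, sub_mul, hdiag, mul_vecMulVec, vecMulVec_mul, hstar, mulVec_transpose]

theorem PosDef.neg_le_det_sub_vecMulVec {C : Matrix ι ι ℝ} (hC : C.PosDef)
    (hdiag : ∀ i, C i i = 1) (v : ι → ℝ) (hv : v ⬝ᵥ v ≤ Fintype.card ι) :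
    -borderedDetBound (Fintype.card ι) ≤ (C - vecMulVec v v).det := by
  obtain ⟨w, hw, hdet⟩ := hC.isHermitian.exists_det_sub_vecMulVec_eq v
  have htrace : ∑ i, hC.isHermitian.eigenvalues i = Fintype.card ι := by
    simpa [trace, hdiag] using hC.isHermitian.trace_eq_sum_eigenvalues.symm
  rw [hdet]
  exact neg_le_det_diagonal_sub_vecMulVec hC.eigenvalues_pos htrace.le w (hw ▸ hv)

noncomputable def correlation (M : Matrix ι ι ℝ) : Matrix ι ι ℝ :=
  diagonal (fun i => (√(M i i))⁻¹) * M * diagonal (fun i => (√(M i i))⁻¹)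

theorem correlation_apply (M : Matrix ι ι ℝ) (i j : ι) :
    correlation M i j = M i j / (√(M i i) * √(M j j)) := by
  rw [correlation, mul_diagonal, diagonal_mul, div_eq_mul_inv, mul_inv]
  ring

theorem correlation_apply_self {M : Matrix ι ι ℝ} {i : ι} (hi : 0 < M i i) :
    correlation M i i = 1 := by
  rw [correlation_apply, Real.mul_self_sqrt hi.le, div_self hi.ne']

theorem det_eq_prod_diag_mul_det_correlation {M : Matrix ι ι ℝ} (hM : ∀ i, 0 < M i i) :
    M.det = (∏ i, M i i) * (correlation M).det := by
  have hscale : (∏ i, M i i) * ((∏ i, (√(M i i))⁻¹) * ∏ i, (√(M i i))⁻¹) = 1 := by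
    rw [← prod_mul_distrib, ← prod_mul_distrib]
    refine prod_eq_one fun i _ => ?_
    rw [← mul_inv, Real.mul_self_sqrt (hM i).le, mul_inv_cancel₀ (hM i).ne']
  rw [correlation, det_mul, det_mul, det_diagonal]
  linear_combination -M.det * hscale

theorem PosDef.correlation {M : Matrix ι ι ℝ} (hM : M.PosDef) : (correlation M).PosDef := by
  have hunit : IsUnit (diagonal fun i => (√(M i i))⁻¹) := by
    rw [isUnit_iff_isUnit_det, det_diagonal]
    exact (prod_ne_zero_iff.mpr fun i _ => inv_ne_zero (Real.sqrt_pos.mpr hM.diag_pos).ne').isUnit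
  simpa [Matrix.correlation] using hM.mul_mul_conjTranspose_same (vecMul_injective_of_isUnit hunit)

theorem neg_le_det_fromBlocks_of_posDef {B : Matrix ι ι ℝ} (hB : B.PosDef) {a : ℝ} (ha : 0 < a)
    (b : ι → ℝ) (hb : ∀ i, b i ^ 2 ≤ B i i * a) :
    -borderedDetBound (Fintype.card ι) * ((∏ i, B i i) * a)
      ≤ (fromBlocks B (replicateCol Unit b) (replicateRow Unit b) (of fun _ _ => a)).det := by
  set M := fromBlocks B (replicateCol Unit b) (replicateRow Unit b) (of fun _ _ => a)
  have hMdiag : ∀ x, 0 < M x x := by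
    rintro (i | ⟨⟩)
    exacts [hB.diag_pos, ha]
  set c : ι → ℝ := fun i => b i / (√(B i i) * √a)
  have hcorr : correlation M
      = fromBlocks (correlation B) (replicateCol Unit c) (replicateRow Unit c) 1 := by
    ext (i | ⟨⟩) (j | ⟨⟩)
    · simp [M, correlation_apply]
    · simp [M, c, correlation_apply]
    · simp [M, c, correlation_apply, mul_comm]
    · simpa using correlation_apply_self (hMdiag (Sum.inr ()))
  have hc : c ⬝ᵥ c ≤ Fintype.card ι := by
    have hci : ∀ i, c i * c i ≤ 1 := fun i => by
      rw [← sq, div_pow, mul_pow, Real.sq_sqrt hB.diag_pos.le, Real.sq_sqrt ha.le]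
      exact div_le_one_of_le₀ (hb i) (mul_pos hB.diag_pos ha).le
    calc c ⬝ᵥ c ≤ ∑ _i : ι, (1 : ℝ) := sum_le_sum fun i _ => hci i
      _ = Fintype.card ι := by simp
  have hcore := hB.correlation.neg_le_det_sub_vecMulVec (fun _ => correlation_apply_self hB.diag_pos)
    c hc
  rw [det_eq_prod_diag_mul_det_correlation hMdiag, Fintype.prod_sum_type, hcorr,
    det_fromBlocks_one₂₂, ← vecMulVec_eq]
  simp only [M, fromBlocks_apply₁₁, fromBlocks_apply₂₂, of_apply, Fintype.prod_unique]
  rw [mul_comm]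
  exact mul_le_mul_of_nonneg_left hcore <|
    mul_nonneg (prod_nonneg fun i _ => hB.diag_pos.le) ha.le

theorem neg_le_det_fromBlocks_of_posSemidef {B : Matrix ι ι ℝ} (hB : B.PosSemidef) {a : ℝ}
    (ha : 0 ≤ a) (b : ι → ℝ) (hb : ∀ i, b i ^ 2 ≤ B i i * a) :
    -borderedDetBound (Fintype.card ι) * ((∏ i, B i i) * a)
      ≤ (fromBlocks B (replicateCol Unit b) (replicateRow Unit b) (of fun _ _ => a)).det := by
  set F : ℝ → ℝ := fun ε =>
    (fromBlocks (B + ε • 1) (replicateCol Unit b) (replicateRow Unit b) (of fun _ _ => a + ε)).det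
  set G : ℝ → ℝ := fun ε => -borderedDetBound (Fintype.card ι) * ((∏ i, (B i i + ε)) * (a + ε))
  have hpos : Set.Ioi 0 ⊆ {ε | G ε ≤ F ε} := fun ε (hε : 0 < ε) => by
    have hBε : (B + ε • 1).PosDef := PosDef.posSemidef_add hB (PosDef.one.smul hε)
    have hdiag : ∀ i, (B + ε • 1) i i = B i i + ε := fun i => by
      rw [add_apply, smul_apply, one_apply_eq, smul_eq_mul, mul_one]
    have hbε : ∀ i, b i ^ 2 ≤ (B + ε • 1) i i * (a + ε) := fun i => by
      have := hB.diag_nonneg (i := i)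
      rw [hdiag]
      nlinarith [hb i]
    have hbound := neg_le_det_fromBlocks_of_posDef hBε (by linarith) b hbε
    simp only [hdiag] at hbound
    exact hbound
  have hclosed : IsClosed {ε | G ε ≤ F ε} := isClosed_le (by fun_prop) (by fun_prop)
  have hzero : (0 : ℝ) ∈ {ε | G ε ≤ F ε} :=
    hclosed.closure_subset_iff.mpr hpos (by rw [closure_Ioi]; exact Set.self_mem_Ici)
  simpa only [Set.mem_ofPred_eq, F, G, add_zero, zero_smul] using hzero

end Matrix

theorem det_lower_bound_bordered_psd_general
    (n : ℕ) (hn : 3 ≤ n)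
    (B : Matrix (Fin (n - 1)) (Fin (n - 1)) ℝ) (b : Fin (n - 1) → ℝ) (a : ℝ)
    (A : Matrix (Fin (n - 1) ⊕ Unit) (Fin (n - 1) ⊕ Unit) ℝ)
    (hAdef : A = Matrix.fromBlocks B (Matrix.of fun i _ => b i)
      (Matrix.of fun _ j => b j) (Matrix.of fun _ _ => a))
    (hB : B.PosSemidef)
    (ha : 0 ≤ a)
    (hb : ∀ i : Fin (n - 1), |b i| ≤ Real.sqrt (B i i * a)) :
    A.det ≥ -((n : ℝ) - 1) * (((n : ℝ) - 1) / ((n : ℝ) - 2)) ^ (n - 2) *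
      ((∏ i : Fin (n - 1), B i i) * a) := by
  have hbsq : ∀ i, b i ^ 2 ≤ B i i * a := fun i => by
    rw [← sq_abs]
    exact (Real.le_sqrt (abs_nonneg _) (mul_nonneg hB.diag_nonneg ha)).mp (hb i)
  have hbound := Matrix.neg_le_det_fromBlocks_of_posSemidef hB ha b hbsq
  have hconst : Matrix.borderedDetBound (Fintype.card (Fin (n - 1)))
      = ((n : ℝ) - 1) * (((n : ℝ) - 1) / ((n : ℝ) - 2)) ^ (n - 2) := by
    rw [Matrix.borderedDetBound, Fintype.card_fin, Nat.cast_sub (by omega), Nat.cast_one, sub_sub,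
      one_add_one_eq_two, Nat.sub_sub]
  rw [hAdef, ge_iff_le, neg_mul ((n : ℝ) - 1), ← hconst]
  exact hbound

/-- Determinant lower bound for a bordered positive semidefinite matrix. -/
theorem det_lower_bound_bordered_psd
    (n : ℕ) (hn : 3 ≤ n)
    (B : Matrix (Fin (n - 1)) (Fin (n - 1)) ℝ) (b : Fin (n - 1) → ℝ) (a : ℝ)
    (A : Matrix (Fin (n - 1) ⊕ Unit) (Fin (n - 1) ⊕ Unit) ℝ)
    (hAdef : A = Matrix.fromBlocks B (Matrix.of fun i _ => b i)
      (Matrix.of fun _ j => b j) (Matrix.of fun _ _ => a))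
    (hB : B.PosSemidef)
    (hdet : A.det ≤ 0) (ha : 0 ≤ a)
    (hb : ∀ i : Fin (n - 1), |b i| ≤ Real.sqrt (B i i * a)) :
    A.det ≥ -((n : ℝ) - 1) * (((n : ℝ) - 1) / ((n : ℝ) - 2)) ^ (n - 2) *
      ((∏ i : Fin (n - 1), B i i) * a) :=
  det_lower_bound_bordered_psd_general n hn B b a A hAdef hB ha hb
end

section
/- Let n ≥ 3 and let A = [[B, b],[bᵀ, a_{nn}]] be an n×n real symmetric matrix where B is (n−1)×(n−1) positive definite, det(A) ≤ 0, a_{nn} > 0, and |b_i| ≤ √(a_{ii}·a_{nn}) for i = 1,…,n−1 (a_{ii} being the diagonal entries of B). Then det(A) > −(n−1)·((n−1)/(n−2))^(n−2) · a_{11}···a_{nn} (strict inequality). -/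
/-!
By the Schur complement, `det A = det B * (a - bᵀ B⁻¹ b)`, so everything rests on an upper bound
for `det B * bᵀ B⁻¹ b`. Rescaling `B` to the unit-diagonal matrix `C = D B D`,
`D = diag (B i i)^(-1/2)`, gives `det B * bᵀ B⁻¹ b = (∏ B i i) * det C * cᵀ C⁻¹ c` with `c = D b`,
and the hypothesis on `b` becomes `c i ^ 2 ≤ a`. In an eigenbasis of `C`, the matrix
`det C * C⁻¹ = adj C` has the eigenvalues `∏_{j ≠ i} λ j`; since `tr C = n - 1`, AM-GM bounds each
of them by `((n - 1) / (n - 2)) ^ (n - 2)`. The inequality is strict because `det B * a > 0`.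
-/

open Matrix Finset

namespace Matrix

variable {ι : Type*} [Fintype ι] [DecidableEq ι]

theorem det_fromBlocks_bordered {K : Type*} [Field K] {B : Matrix ι ι K} (hB : IsUnit B.det)
    (u v : ι → K) (a : K) :
    (fromBlocks B (of fun i (_ : Unit) => u i) (of fun _ j => v j) (of fun _ _ => a)).det =
      B.det * (a - v ⬝ᵥ (B⁻¹ *ᵥ u)) := by
  let := B.invertibleOfIsUnitDet hB
  rw [det_fromBlocks₁₁, invOf_eq_nonsing_inv]
  congr 1
  rw [det_unique]
  simp only [PUnit.default_eq_unit, sub_apply, of_apply, mul_apply, sum_mul, mul_assoc,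
    dotProduct, mulVec, mul_sum, sub_right_inj]
  exact sum_comm

theorem dotProduct_mul_diagonal_mul_transpose_mulVec {R : Type*} [CommSemiring R]
    (U : Matrix ι ι R) (f x : ι → R) :
    x ⬝ᵥ ((U * diagonal f * Uᵀ) *ᵥ x) = ∑ i, f i * (x ᵥ* U) i ^ 2 := by
  rw [← mulVec_mulVec, ← mulVec_mulVec, mulVec_transpose, dotProduct_mulVec]
  simp only [dotProduct, mulVec_diagonal]
  exact sum_congr rfl fun i _ => by ring

theorem dotProduct_inv_mulVec_diagonal_mul_mul_diagonal {K : Type*} [Field K] (B : Matrix ι ι K)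
    {d : ι → K} (hd : ∀ i, d i ≠ 0) (b : ι → K) :
    (diagonal d *ᵥ b) ⬝ᵥ ((diagonal d * B * diagonal d)⁻¹ *ᵥ (diagonal d *ᵥ b)) =
      b ⬝ᵥ (B⁻¹ *ᵥ b) := by
  have hD : IsUnit (diagonal d).det := by
    rw [det_diagonal]
    exact (prod_ne_zero_iff.2 fun i _ => hd i).isUnit
  have hsymm : diagonal d *ᵥ b = b ᵥ* diagonal d := by
    funext i
    rw [mulVec_diagonal, vecMul_diagonal, mul_comm]
  rw [Matrix.mul_inv_rev, Matrix.mul_inv_rev, ← mulVec_mulVec, ← mulVec_mulVec, mulVec_mulVec b,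
    nonsing_inv_mul _ hD, one_mulVec, dotProduct_mulVec, hsymm, vecMul_vecMul,
    mul_nonsing_inv _ hD, vecMul_one]

namespace IsHermitian

variable {M : Matrix ι ι ℝ} (hM : M.IsHermitian)

theorem eq_eigenvectorUnitary_mul_diagonal_mul_transpose :
    M = (hM.eigenvectorUnitary : Matrix ι ι ℝ) * diagonal hM.eigenvalues *
      (hM.eigenvectorUnitary : Matrix ι ι ℝ)ᵀ := by
  conv_lhs => rw [hM.spectral_theorem]
  simp [star_eq_conjTranspose, conjTranspose_eq_transpose_of_trivial]

theorem eigenvectorUnitary_mul_transpose :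
    (hM.eigenvectorUnitary : Matrix ι ι ℝ) * (hM.eigenvectorUnitary : Matrix ι ι ℝ)ᵀ = 1 := by
  simpa [star_eq_conjTranspose, conjTranspose_eq_transpose_of_trivial] using
    Unitary.coe_mul_star_self hM.eigenvectorUnitary

theorem transpose_mul_eigenvectorUnitary :
    (hM.eigenvectorUnitary : Matrix ι ι ℝ)ᵀ * (hM.eigenvectorUnitary : Matrix ι ι ℝ) = 1 := by
  simpa [star_eq_conjTranspose, conjTranspose_eq_transpose_of_trivial] using
    Unitary.coe_star_mul_self hM.eigenvectorUnitary

theorem dotProduct_self_eq_sum_vecMul_eigenvectorUnitary_sq (x : ι → ℝ) :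
    x ⬝ᵥ x = ∑ i, (x ᵥ* (hM.eigenvectorUnitary : Matrix ι ι ℝ)) i ^ 2 := by
  simpa only [diagonal_one, mul_one, hM.eigenvectorUnitary_mul_transpose, one_mulVec,
    Pi.one_apply, one_mul] using
    dotProduct_mul_diagonal_mul_transpose_mulVec (hM.eigenvectorUnitary : Matrix ι ι ℝ)
      (fun _ => 1) x

end IsHermitian

namespace PosDef

variable {M : Matrix ι ι ℝ}

theorem inv_eq_eigenvectorUnitary_mul_diagonal_mul_transpose (hM : M.PosDef) :
    M⁻¹ = (hM.1.eigenvectorUnitary : Matrix ι ι ℝ) * diagonal hM.1.eigenvalues⁻¹ *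
      (hM.1.eigenvectorUnitary : Matrix ι ι ℝ)ᵀ := by
  set U : Matrix ι ι ℝ := (hM.1.eigenvectorUnitary : Matrix ι ι ℝ)
  have hinv : ∀ i, hM.1.eigenvalues i * hM.1.eigenvalues⁻¹ i = 1 :=
    fun i => mul_inv_cancel₀ (hM.eigenvalues_pos i).ne'
  refine inv_eq_right_inv ?_
  calc M * (U * diagonal hM.1.eigenvalues⁻¹ * Uᵀ)
      = U * diagonal hM.1.eigenvalues * Uᵀ * (U * diagonal hM.1.eigenvalues⁻¹ * Uᵀ) :=
        congrArg (· * _) hM.1.eq_eigenvectorUnitary_mul_diagonal_mul_transpose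
    _ = U * (diagonal hM.1.eigenvalues * (Uᵀ * U) * diagonal hM.1.eigenvalues⁻¹) * Uᵀ := by
        simp only [Matrix.mul_assoc]
    _ = 1 := by
        simp only [U, hM.1.transpose_mul_eigenvectorUnitary, Matrix.mul_one,
          diagonal_mul_diagonal, hinv, diagonal_one, hM.1.eigenvectorUnitary_mul_transpose]

theorem det_mul_dotProduct_inv_mulVec (hM : M.PosDef) (x : ι → ℝ) :
    M.det * (x ⬝ᵥ (M⁻¹ *ᵥ x)) = ∑ i, (∏ j ∈ univ.erase i, hM.1.eigenvalues j) *
      (x ᵥ* (hM.1.eigenvectorUnitary : Matrix ι ι ℝ)) i ^ 2 := by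
  rw [hM.inv_eq_eigenvectorUnitary_mul_diagonal_mul_transpose,
    dotProduct_mul_diagonal_mul_transpose_mulVec, hM.1.det_eq_prod_eigenvalues, mul_sum]
  refine sum_congr rfl fun i _ => ?_
  rw [← mul_prod_erase univ _ (mem_univ i)]
  have hne : hM.1.eigenvalues i ≠ 0 := (hM.eigenvalues_pos i).ne'
  simp only [RCLike.ofReal_real_eq_id, id, Pi.inv_apply]
  field_simp

theorem prod_erase_eigenvalues_le (hM : M.PosDef) (i : ι) :
    ∏ j ∈ univ.erase i, hM.1.eigenvalues j ≤
      (M.trace / (Fintype.card ι - 1 : ℕ)) ^ (Fintype.card ι - 1) := by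
  have hcard : #(univ.erase i) = Fintype.card ι - 1 := by
    rw [card_erase_of_mem (mem_univ i), card_univ]
  have hpos : ∀ j ∈ univ.erase i, 0 ≤ hM.1.eigenvalues j := fun j _ => (hM.eigenvalues_pos j).le
  have hsum : ∑ j ∈ univ.erase i, hM.1.eigenvalues j ≤ M.trace := by
    rw [hM.1.trace_eq_sum_eigenvalues]
    exact sum_le_univ_sum_of_nonneg fun j => (hM.eigenvalues_pos j).le
  calc ∏ j ∈ univ.erase i, hM.1.eigenvalues j
      ≤ ((∑ j ∈ univ.erase i, hM.1.eigenvalues j) / #(univ.erase i)) ^ #(univ.erase i) :=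
        Real.prod_le_sum_div_card_pow _ hpos
    _ ≤ _ := by
        rw [hcard]
        gcongr
        exact div_nonneg (sum_nonneg hpos) (Nat.cast_nonneg _)

theorem det_mul_dotProduct_inv_mulVec_le (hM : M.PosDef) (x : ι → ℝ) :
    M.det * (x ⬝ᵥ (M⁻¹ *ᵥ x)) ≤
      (M.trace / (Fintype.card ι - 1 : ℕ)) ^ (Fintype.card ι - 1) * (x ⬝ᵥ x) := by
  rw [hM.det_mul_dotProduct_inv_mulVec, hM.1.dotProduct_self_eq_sum_vecMul_eigenvectorUnitary_sq,
    mul_sum]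
  gcongr with i
  exact hM.prod_erase_eigenvalues_le i

theorem det_mul_dotProduct_inv_mulVec_le_prod_diag {B : Matrix ι ι ℝ} (hB : B.PosDef)
    (b : ι → ℝ) :
    B.det * (b ⬝ᵥ (B⁻¹ *ᵥ b)) ≤
      ((Fintype.card ι : ℝ) / (Fintype.card ι - 1 : ℕ)) ^ (Fintype.card ι - 1) *
        (∏ i, B i i) * ∑ i, b i ^ 2 / B i i := by
  set d : ι → ℝ := fun i => (√(B i i))⁻¹
  have hd : ∀ i, d i ≠ 0 := fun i => inv_ne_zero (Real.sqrt_pos.2 hB.diag_pos).ne'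
  have hdsq : ∀ i, d i ^ 2 = (B i i)⁻¹ := fun i => by
    simp only [d, inv_pow, Real.sq_sqrt hB.diag_pos.le]
  set C := diagonal d * B * diagonal d
  have hC : C.PosDef := by
    have hD : IsUnit (diagonal d) := isUnit_diagonal.2 (Pi.isUnit_iff.2 fun i => (hd i).isUnit)
    simpa [star_eq_conjTranspose, diagonal_conjTranspose] using
      (IsUnit.posDef_star_left_conjugate_iff hD).2 hB
  have htrace : C.trace = Fintype.card ι := by
    have hdiag : ∀ i, C i i = 1 := fun i => by
      change (diagonal d * B * diagonal d) i i = 1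
      rw [mul_diagonal, diagonal_mul, mul_right_comm, ← sq, hdsq, inv_mul_cancel₀ hB.diag_pos.ne']
    simp [trace, hdiag]
  have hdet : B.det = (∏ i, B i i) * C.det := by
    have hprod : ∏ i, B i i * d i ^ 2 = 1 :=
      prod_eq_one fun i _ => by rw [hdsq, mul_inv_cancel₀ hB.diag_pos.ne']
    calc B.det = (∏ i, B i i * d i ^ 2) * B.det := by rw [hprod, one_mul]
      _ = (∏ i, B i i) * C.det := by
        rw [det_mul, det_mul, det_diagonal, prod_mul_distrib, prod_pow]
        ring
  have hnorm : (diagonal d *ᵥ b) ⬝ᵥ (diagonal d *ᵥ b) = ∑ i, b i ^ 2 / B i i := by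
    refine sum_congr rfl fun i _ => ?_
    rw [mulVec_diagonal, div_eq_mul_inv, ← hdsq]
    ring
  calc B.det * (b ⬝ᵥ (B⁻¹ *ᵥ b))
      = (∏ i, B i i) * (C.det * ((diagonal d *ᵥ b) ⬝ᵥ (C⁻¹ *ᵥ (diagonal d *ᵥ b)))) := by
        rw [dotProduct_inv_mulVec_diagonal_mul_mul_diagonal B hd, hdet, mul_assoc]
    _ ≤ (∏ i, B i i) * ((C.trace / (Fintype.card ι - 1 : ℕ)) ^ (Fintype.card ι - 1) *
          ((diagonal d *ᵥ b) ⬝ᵥ (diagonal d *ᵥ b))) :=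
        mul_le_mul_of_nonneg_left (hC.det_mul_dotProduct_inv_mulVec_le _)
          (prod_nonneg fun i _ => hB.diag_pos.le)
    _ = _ := by rw [htrace, hnorm]; ring

end PosDef

end Matrix

theorem det_lower_bound_bordered_pd_general
    (n : ℕ) (hn : 3 ≤ n)
    (B : Matrix (Fin (n - 1)) (Fin (n - 1)) ℝ) (b : Fin (n - 1) → ℝ) (a : ℝ)
    (A : Matrix (Fin (n - 1) ⊕ Unit) (Fin (n - 1) ⊕ Unit) ℝ)
    (hAdef : A = Matrix.fromBlocks B (Matrix.of fun i _ => b i)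
      (Matrix.of fun _ j => b j) (Matrix.of fun _ _ => a))
    (hB : B.PosDef)
    (ha : 0 < a)
    (hb : ∀ i : Fin (n - 1), |b i| ≤ Real.sqrt (B i i * a)) :
    A.det > -((n : ℝ) - 1) * (((n : ℝ) - 1) / ((n : ℝ) - 2)) ^ (n - 2) *
      ((∏ i : Fin (n - 1), B i i) * a) := by
  have hn' : (3 : ℝ) ≤ n := by exact_mod_cast hn
  have hK : ((Fintype.card (Fin (n - 1)) : ℝ) / (Fintype.card (Fin (n - 1)) - 1 : ℕ)) ^
      (Fintype.card (Fin (n - 1)) - 1) = (((n : ℝ) - 1) / ((n : ℝ) - 2)) ^ (n - 2) := by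
    rw [Fintype.card_fin, Nat.sub_sub, Nat.cast_sub (by omega), Nat.cast_sub (by omega)]
    norm_num
  have hK0 : 0 ≤ (((n : ℝ) - 1) / ((n : ℝ) - 2)) ^ (n - 2) * ∏ i, B i i :=
    mul_nonneg (pow_nonneg (div_nonneg (by linarith) (by linarith)) _)
      (prod_nonneg fun i _ => hB.diag_pos.le)
  have hbound : ∑ i, b i ^ 2 / B i i ≤ ((n : ℝ) - 1) * a := by
    calc ∑ i, b i ^ 2 / B i i ≤ ∑ _i : Fin (n - 1), a := by
          refine sum_le_sum fun i _ => (div_le_iff₀' hB.diag_pos).2 ?_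
          rw [← sq_abs]
          exact (Real.le_sqrt (abs_nonneg _) (mul_nonneg hB.diag_pos.le ha.le)).1 (hb i)
      _ = ((n : ℝ) - 1) * a := by
          rw [sum_const, card_univ, Fintype.card_fin, nsmul_eq_mul, Nat.cast_sub (by omega)]
          norm_num
  have hquad := hB.det_mul_dotProduct_inv_mulVec_le_prod_diag b
  rw [hK] at hquad
  rw [hAdef, det_fromBlocks_bordered hB.det_pos.ne'.isUnit, mul_sub]
  linarith [mul_le_mul_of_nonneg_left hbound hK0, mul_pos hB.det_pos ha]

/-- Strict determinant lower bound for a bordered positive definite matrix. -/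
theorem det_lower_bound_bordered_pd
    (n : ℕ) (hn : 3 ≤ n)
    (B : Matrix (Fin (n - 1)) (Fin (n - 1)) ℝ) (b : Fin (n - 1) → ℝ) (a : ℝ)
    (A : Matrix (Fin (n - 1) ⊕ Unit) (Fin (n - 1) ⊕ Unit) ℝ)
    (hAdef : A = Matrix.fromBlocks B (Matrix.of fun i _ => b i)
      (Matrix.of fun _ j => b j) (Matrix.of fun _ _ => a))
    (hB : B.PosDef)
    (hdet : A.det ≤ 0) (ha : 0 < a)
    (hb : ∀ i : Fin (n - 1), |b i| ≤ Real.sqrt (B i i * a)) :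
    A.det > -((n : ℝ) - 1) * (((n : ℝ) - 1) / ((n : ℝ) - 2)) ^ (n - 2) *
      ((∏ i : Fin (n - 1), B i i) * a) :=
  det_lower_bound_bordered_pd_general n hn B b a A hAdef hB ha hb
end

section
/- Let n ≥ 3, and let A be the n×n symmetric matrix whose top-left (n−1)×(n−1) block B has entries b_{ii} = 1 and b_{ij} = −1/(n−2) for i ≠ j, with last column/row given by b = (1,…,1)ᵀ and a_{nn} = 1. Then every proper principal minor of B is positive, det(B) = 0, and det(A) = −(n−1)·((n−1)/(n−2))^(n−2). In particular, this matrix attains equality in the determinant lower bound det(A) ≥ −(n−1)·((n−1)/(n−2))^(n−2)·a_{11}···a_{nn}. -/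
open Matrix Finset

/-!
`B` is the matrix with constant diagonal `1` and constant off-diagonal `-c`, `c = 1/(n-2)`. Such a
`k × k` matrix is a scalar matrix plus a rank-one matrix, so its determinant is
`(1 + c)^(k-1) (1 - (k-1) c)`; every principal submatrix is again of this shape. Hence proper
principal minors are positive (`k ≤ n - 2`) and `det B = 0` (`k = n - 1`). Eliminating the corner
entry of `A` by the Schur complement leaves `B - 𝟙𝟙ᵀ`, of the same shape with diagonal `0`
and off-diagonal `-(1 + c) = -(n-1)/(n-2)`.
-/

namespace Matrix

variable {K m ι : Type*} [DecidableEq m] [DecidableEq ι]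

def constDiagOffDiag (x y : K) : Matrix m m K :=
  of fun i j => if i = j then x else y

theorem submatrix_constDiagOffDiag (x y : K) {f : ι → m} (hf : Function.Injective f) :
    (constDiagOffDiag x y : Matrix m m K).submatrix f f = constDiagOffDiag x y := by
  ext i j
  simp [constDiagOffDiag, hf.eq_iff]

theorem constDiagOffDiag_sub_const [Sub K] (x y z : K) :
    (constDiagOffDiag x y : Matrix m m K) - of (fun _ _ => z)
      = constDiagOffDiag (x - z) (y - z) := by
  ext i j
  by_cases hij : i = j <;> simp [constDiagOffDiag, hij]

theorem det_constDiagOffDiag [Fintype m] [Field K] [Nonempty m] {x y : K} (hxy : x ≠ y) :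
    (constDiagOffDiag x y : Matrix m m K).det
      = (x - y) ^ (Fintype.card m - 1) * (x + (Fintype.card m - 1) * y) := by
  have hsub : x - y ≠ 0 := sub_ne_zero.mpr hxy
  have hrankOne : (constDiagOffDiag x y : Matrix m m K)
      = (x - y) • (1 + replicateCol Unit (fun _ => (1 : K))
          * replicateRow Unit (fun _ => y / (x - y))) := by
    ext i j
    by_cases hij : i = j
    · simp [constDiagOffDiag, hij, mul_apply]
      field_simp
      ring
    · simp [constDiagOffDiag, hij, mul_apply]
      field_simp
  have hdot : (fun _ : m => y / (x - y)) ⬝ᵥ (fun _ => (1 : K))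
      = Fintype.card m * (y / (x - y)) := by
    simp [dotProduct, mul_comm]
  obtain ⟨k, hk⟩ : ∃ k, Fintype.card m = k + 1 := Nat.exists_eq_add_one.mpr Fintype.card_pos
  rw [hrankOne, det_smul, det_one_add_replicateCol_mul_replicateRow, hdot, hk]
  push_cast
  field_simp
  ring

theorem det_constDiagOffDiag_one_neg_pos [Fintype m] [Field K] [LinearOrder K]
    [IsStrictOrderedRing K] {c : K} (hc : 0 ≤ c) (hcard : ((Fintype.card m : K) - 1) * c < 1) :
    0 < (constDiagOffDiag 1 (-c) : Matrix m m K).det := by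
  cases isEmpty_or_nonempty m
  · simp
  rw [det_constDiagOffDiag (by linarith)]
  exact mul_pos (pow_pos (by linarith) _) (by linarith)

theorem det_constDiagOffDiag_one_neg_inv_pos [Fintype m] [Field K] [LinearOrder K]
    [IsStrictOrderedRing K] {k : ℕ} (hcard : Fintype.card m ≤ k) :
    0 < (constDiagOffDiag 1 (-(1 / (k : K))) : Matrix m m K).det := by
  refine det_constDiagOffDiag_one_neg_pos (by positivity) ?_
  rcases k.eq_zero_or_pos with rfl | hk
  · simp
  rw [← div_eq_mul_one_div, div_lt_one (by positivity), sub_lt_iff_lt_add]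
  exact lt_add_of_le_of_pos (by exact_mod_cast hcard) one_pos

theorem det_constDiagOffDiag_one_neg_inv_eq_zero [Fintype m] [Field K] [LinearOrder K]
    [IsStrictOrderedRing K] {k : ℕ} (hk : k ≠ 0) (hcard : Fintype.card m = k + 1) :
    (constDiagOffDiag 1 (-(1 / (k : K))) : Matrix m m K).det = 0 := by
  have : Nonempty m := Fintype.card_pos_iff.mp (by omega)
  rw [det_constDiagOffDiag (by linarith [show (0 : K) ≤ 1 / k by positivity]), hcard]
  apply mul_eq_zero_of_right
  push_cast
  field_simp
  ring

theorem det_fromBlocks_ones [Fintype m] [CommRing K] (M : Matrix m m K) :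
    (fromBlocks M (of fun _ _ => 1) (of fun _ _ => 1) (of fun _ _ => 1) :
      Matrix (m ⊕ Unit) (m ⊕ Unit) K).det = (M - of fun _ _ => 1).det := by
  have hcorner : (of fun _ _ => 1 : Matrix Unit Unit K) = 1 := by
    ext i j
    simp [Subsingleton.elim i j]
  rw [hcorner, det_fromBlocks_one₂₂]
  congr 2
  ext i j
  simp [mul_apply]

end Matrix

/-- The bordered extremal example: with `B` having unit diagonal and off-diagonal entries
`-1/(n-2)`, border vector of ones and corner entry `1`, every proper principal minor of `B`
is positive, `det B = 0`, and `det A` attains the bordered determinant lower bound. -/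
theorem extremal_bordered_matrix
    (n : ℕ) (hn : 3 ≤ n)
    (B : Matrix (Fin (n - 1)) (Fin (n - 1)) ℝ)
    (hBdef : ∀ i j : Fin (n - 1), B i j = if i = j then 1 else -(1 / ((n : ℝ) - 2)))
    (A : Matrix (Fin (n - 1) ⊕ Unit) (Fin (n - 1) ⊕ Unit) ℝ)
    (hAdef : A = Matrix.fromBlocks B (Matrix.of fun _ _ => (1 : ℝ))
      (Matrix.of fun _ _ => (1 : ℝ)) (Matrix.of fun _ _ => (1 : ℝ))) :
    (∀ s : Finset (Fin (n - 1)), s ≠ Finset.univ →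
      0 < (B.submatrix (fun j : {j : Fin (n - 1) // j ∈ s} => (j : Fin (n - 1)))
        (fun j : {j : Fin (n - 1) // j ∈ s} => (j : Fin (n - 1)))).det) ∧
    B.det = 0 ∧
    A.det = -((n : ℝ) - 1) * (((n : ℝ) - 1) / ((n : ℝ) - 2)) ^ (n - 2) := by
  have hk : ((n - 2 : ℕ) : ℝ) = n - 2 := by
    rw [Nat.cast_sub (by omega)]
    norm_num
  have hB : B = constDiagOffDiag 1 (-(1 / ((n - 2 : ℕ) : ℝ))) := by
    rw [hk]
    exact Matrix.ext hBdef
  have hcard : Fintype.card (Fin (n - 1)) = n - 2 + 1 := by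
    rw [Fintype.card_fin]
    omega
  refine ⟨fun s hs => ?_, ?_, ?_⟩
  · rw [hB, submatrix_constDiagOffDiag _ _ Subtype.val_injective]
    apply det_constDiagOffDiag_one_neg_inv_pos
    have := card_lt_card (ssubset_univ_iff.mpr hs)
    rw [Fintype.card_coe]
    rw [card_univ, hcard] at this
    omega
  · rw [hB]
    exact det_constDiagOffDiag_one_neg_inv_eq_zero (by omega) hcard
  · have : Nonempty (Fin (n - 1)) := Fintype.card_pos_iff.mp (by omega)
    have hn2 : (0 : ℝ) < n - 2 := by
      rw [sub_pos]
      exact_mod_cast hn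
    rw [hAdef, det_fromBlocks_ones, hB, constDiagOffDiag_sub_const, hk, sub_self,
      det_constDiagOffDiag (by linarith [one_div_pos.mpr hn2]), hcard, Nat.add_sub_cancel]
    push_cast
    rw [hk]
    field_simp
    ring
end

section
/- Let n ≥ 3. Set p = ((n−2)/(n−1))^(n−1), t = (1−p)/(n−1), s² = (1+(n−2)p)/((n−1)(n−2)), and B = I_{n−1} − t·J_{n−1}. Let A be the n×n symmetric matrix with top-left block B, last column s·𝟏, and bottom-right entry 1. Then every (n−1)×(n−1) principal submatrix of A is positive semidefinite, det(A) = −1/(n−2), det(B) = p, and det(A) = −(1/(n−2))·((n−1)/(n−2))^(n−1)·det(B)·1, i.e., the extended Fischer inequality with α = {n} holds with equality for A. -/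
/-!
Write `J` for the all-ones matrix on `m` indices. The matrix determinant lemma gives
`det (I - c J) = 1 - c m`, and Cauchy–Schwarz `(∑ xᵢ)² ≤ m ∑ xᵢ²` shows that `I - c J` is
positive semidefinite as soon as `c m ≤ 1`. Here `B = I - t J` with `t (n - 1) = 1 - p`, and the
Schur complement of the corner entry `1` of `A` is `B - s² J = I - J / (n - 2)`, since
`t + s² = 1 / (n - 2)`. This gives both determinants. Deleting the last index of `A` leaves `B`;
deleting an index `i ≤ n - 1` leaves a matrix whose Schur complement is `I - J / (n - 2)` on
`n - 2` indices, which is singular but positive semidefinite.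
-/

open Matrix Finset

section AllOnes

variable {ι κ R : Type*} [DecidableEq ι]

theorem det_one_sub_smul_allOnes [Fintype ι] [CommRing R] (c : R) :
    (1 - c • of fun _ _ => (1 : R) : Matrix ι ι R).det = 1 - c * Fintype.card ι := by
  have hrankOne : (1 - c • of fun _ _ => (1 : R) : Matrix ι ι R) =
      1 + replicateCol Unit (fun _ : ι => -c) * replicateRow Unit (fun _ : ι => (1 : R)) := by
    ext i j
    simp [Matrix.mul_apply, sub_eq_add_neg]
  rw [hrankOne, det_one_add_replicateCol_mul_replicateRow]
  simp [dotProduct, sub_eq_add_neg, mul_comm]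

theorem submatrix_one_sub_smul_allOnes [Ring R] [DecidableEq κ] (c : R) {f : κ → ι}
    (hf : Function.Injective f) :
    (1 - c • of fun _ _ => (1 : R) : Matrix ι ι R).submatrix f f =
      1 - c • of fun _ _ => 1 := by
  ext i j
  simp [one_apply, hf.eq_iff]

theorem one_sub_smul_allOnes_sub_const_mul_const [CommRing R] (t s : R) :
    (1 - t • of fun _ _ => (1 : R) : Matrix ι ι R) -
        (of fun _ _ => s : Matrix ι Unit R) * (of fun _ _ => s : Matrix Unit ι R) =
      1 - (t + s ^ 2) • of fun _ _ => 1 := by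
  ext i j
  simp only [smul_of, Matrix.sub_apply, of_apply, Pi.smul_apply, smul_eq_mul, mul_one, mul_apply,
    univ_unique, sum_const, card_singleton, one_smul, sq]
  ring

theorem posSemidef_one_sub_smul_allOnes [Fintype ι] {c : ℝ} (hc : c * Fintype.card ι ≤ 1) :
    (1 - c • of fun _ _ => (1 : ℝ) : Matrix ι ι ℝ).PosSemidef := by
  refine posSemidef_iff_dotProduct_mulVec.mpr ⟨?_, fun x => ?_⟩
  · ext i j
    simp [one_apply, eq_comm]
  have hJ : (of fun _ _ => (1 : ℝ) : Matrix ι ι ℝ) *ᵥ x = fun _ => ∑ i, x i := by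
    ext; simp [mulVec, dotProduct]
  have hform : star x ⬝ᵥ ((1 - c • of fun _ _ => (1 : ℝ)) *ᵥ x) =
      ∑ i, x i ^ 2 - c * (∑ i, x i) ^ 2 := by
    rw [sub_mulVec, one_mulVec, smul_mulVec, hJ, dotProduct_sub, dotProduct_smul]
    simp [dotProduct, ← sum_mul, sq]
  have hsq : 0 ≤ ∑ i, x i ^ 2 := sum_nonneg fun i _ => sq_nonneg (x i)
  have hcs : (∑ i, x i) ^ 2 ≤ Fintype.card ι * ∑ i, x i ^ 2 := sq_sum_le_card_mul_sum_sq
  rw [hform]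
  rcases le_or_gt c 0 with hc0 | hc0
  · nlinarith [sq_nonneg (∑ i, x i)]
  · nlinarith

end AllOnes

section Blocks

variable {ι R : Type*} [CommRing R] [PartialOrder R] [StarRing R]

theorem posSemidef_submatrix_ne_inr_iff (P : Matrix ι ι R) (Q : Matrix ι Unit R)
    (Q' : Matrix Unit ι R) (d : Matrix Unit Unit R) :
    ((fromBlocks P Q Q' d).submatrix (Subtype.val : {j : ι ⊕ Unit // j ≠ .inr ()} → ι ⊕ Unit)
      Subtype.val).PosSemidef ↔ P.PosSemidef := by
  let e : ι ≃ {j : ι ⊕ Unit // j ≠ .inr ()} :=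
    Equiv.sumIsLeft.symm.trans (Equiv.subtypeEquivRight fun j => by cases j <;> simp)
  rw [← posSemidef_submatrix_equiv e, submatrix_submatrix]
  rfl

theorem posSemidef_submatrix_ne_inl_iff [StarOrderedRing R] [NoZeroDivisors R] [Finite ι]
    (P : Matrix ι ι R) (q : Matrix ι Unit R) (a : ι) :
    ((fromBlocks P q qᴴ 1).submatrix (Subtype.val : {j : ι ⊕ Unit // j ≠ .inl a} → ι ⊕ Unit)
      Subtype.val).PosSemidef ↔
      ((P - q * qᴴ).submatrix (Subtype.val : {i // i ≠ a} → ι) Subtype.val).PosSemidef := by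
  let e : {i // i ≠ a} ⊕ Unit ≃ {j : ι ⊕ Unit // j ≠ .inl a} :=
    (Equiv.sumCongr (Equiv.subtypeEquivRight fun i => by simp)
      (Equiv.subtypeUnivEquiv fun u => Sum.inr_ne_inl).symm).trans
      (Equiv.subtypeSum (p := fun j : ι ⊕ Unit => j ≠ .inl a)).symm
  have hblocks : (fromBlocks P q qᴴ 1).submatrix (Subtype.val ∘ e) (Subtype.val ∘ e) =
      fromBlocks (P.submatrix Subtype.val Subtype.val) (q.submatrix Subtype.val id)
        (q.submatrix Subtype.val id)ᴴ 1 := by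
    ext (i | i) (j | j) <;> rfl
  have : Invertible (1 : Matrix Unit Unit R) := invertibleOne
  rw [← posSemidef_submatrix_equiv e, submatrix_submatrix, hblocks,
    PosDef.fromBlocks₂₂ _ _ (PosDef.one : (1 : Matrix Unit Unit R).PosDef), inv_one,
    Matrix.mul_one]
  rfl

end Blocks

/-- The extremal example for the extended Fischer inequality with `α = {n}`: all
`(n-1)×(n-1)` principal submatrices of `A` are PSD, `det A = -1/(n-2)`, `det B = p`, and
equality holds in the extended Fischer inequality. -/
theorem extremal_matrix_extended_fischer
    (n : ℕ) (hn : 3 ≤ n)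
    (p t s : ℝ)
    (hp : p = (((n : ℝ) - 2) / ((n : ℝ) - 1)) ^ (n - 1))
    (ht : t = (1 - p) / ((n : ℝ) - 1))
    (hs : 0 ≤ s ∧ s ^ 2 = (1 + ((n : ℝ) - 2) * p) / (((n : ℝ) - 1) * ((n : ℝ) - 2)))
    (B : Matrix (Fin (n - 1)) (Fin (n - 1)) ℝ)
    (hBdef : B = (1 : Matrix (Fin (n - 1)) (Fin (n - 1)) ℝ) -
      t • (Matrix.of fun _ _ => (1 : ℝ)))
    (A : Matrix (Fin (n - 1) ⊕ Unit) (Fin (n - 1) ⊕ Unit) ℝ)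
    (hAdef : A = Matrix.fromBlocks B (Matrix.of fun _ _ => s)
      (Matrix.of fun _ _ => s) (Matrix.of fun _ _ => (1 : ℝ))) :
    (∀ i : Fin (n - 1) ⊕ Unit,
      (A.submatrix (fun j : {j : Fin (n - 1) ⊕ Unit // j ≠ i} => (j : Fin (n - 1) ⊕ Unit))
        (fun j : {j : Fin (n - 1) ⊕ Unit // j ≠ i} => (j : Fin (n - 1) ⊕ Unit))).PosSemidef) ∧
    A.det = -(1 / ((n : ℝ) - 2)) ∧
    B.det = p ∧
    A.det = -(1 / ((n : ℝ) - 2)) * (((n : ℝ) - 1) / ((n : ℝ) - 2)) ^ (n - 1) * B.det * 1 := by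
  have hn3 : (3 : ℝ) ≤ n := by exact_mod_cast hn
  have hn1 : (0 : ℝ) < n - 1 := by linarith
  have hn2 : (0 : ℝ) < n - 2 := by linarith
  have hcard : ((n - 1 : ℕ) : ℝ) = n - 1 := by rw [Nat.cast_sub (by omega), Nat.cast_one]
  have hp0 : 0 ≤ p := hp ▸ by positivity
  have htcard : t * (n - 1) = 1 - p := by rw [ht, div_mul_cancel₀ _ hn1.ne']
  have hschur : t + s ^ 2 = 1 / (n - 2) := by rw [ht, hs.2]; field_simp; ring
  have hcol : (of fun _ _ => s : Matrix (Fin (n - 1)) Unit ℝ)ᴴ = of fun _ _ => s := by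
    ext; simp
  have hA : A = fromBlocks B (of fun _ _ => s) (of fun _ _ => s)ᴴ 1 := by
    rw [hAdef, hcol]; rfl
  have hdetB : B.det = p := by
    rw [hBdef, det_one_sub_smul_allOnes, Fintype.card_fin, hcard, htcard, sub_sub_cancel]
  have hdetA : A.det = -(1 / ((n : ℝ) - 2)) := by
    rw [hA, det_fromBlocks_one₂₂, hcol, hBdef, one_sub_smul_allOnes_sub_const_mul_const,
      det_one_sub_smul_allOnes, Fintype.card_fin, hcard, hschur]
    field_simp
    ring
  refine ⟨?_, hdetA, hdetB, ?_⟩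
  · rintro (a | ⟨⟩)
    · rw [hA, posSemidef_submatrix_ne_inl_iff, hcol, hBdef,
        one_sub_smul_allOnes_sub_const_mul_const,
        submatrix_one_sub_smul_allOnes _ Subtype.val_injective, hschur]
      refine posSemidef_one_sub_smul_allOnes (le_of_eq ?_)
      have hcardNe : Fintype.card {i : Fin (n - 1) // i ≠ a} = n - 2 := by simp; omega
      rw [hcardNe, Nat.cast_sub (by omega), Nat.cast_ofNat]
      field_simp
    · rw [hA, posSemidef_submatrix_ne_inr_iff, hBdef]
      exact posSemidef_one_sub_smul_allOnes (by rw [Fintype.card_fin, hcard, htcard]; linarith)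
  · rw [hdetA, hdetB, hp, mul_one, mul_assoc, ← mul_pow, div_mul_div_comm,
      mul_comm ((n : ℝ) - 1), div_self (by positivity), one_pow, mul_one]
end

section
/- (Crabtree–Haynsworth quotient property) Let A be a square matrix, B a nonsingular principal submatrix of A, and C a nonsingular principal submatrix of B. Then the Schur complement B/C is a principal submatrix of A/C, and A/B = (A/C)/(B/C). -/
/-!
Write `A[r, c] - A[r, p] A[p, p]⁻¹ A[p, c]` for the Schur complement of the pivot block indexed
by a map `p`, restricted to rows `r` and columns `c`. It is natural in `r` and `c` and invariant
under reindexing the pivot, so `B/C` is the restriction of `A/C` to the rows and columns of `B`.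
For a pivot split as `p₁ ⊕ p₂`, the block inverse formula for `[[P, Q], [S, T]]` around the Schur
complement `T - S P⁻¹ Q` turns the complement with pivot `p₁ ⊕ p₂` into the complement with pivot
`p₂` of the complement with pivot `p₁`; with `p₁ = γ` and `p₂ = β ∖ γ` this is
`A/B = (A/C)/(B/C)`, and `B/C` is invertible because `det B = det C · det (B/C)`.
-/

open Matrix Finset

/-- The principal submatrix of `A` indexed by a finset `s`. -/
def principalSub {ι : Type*} (A : Matrix ι ι ℝ) (s : Finset ι) :
    Matrix {i : ι // i ∈ s} {i : ι // i ∈ s} ℝ :=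
  A.submatrix (fun i => (i : ι)) (fun i => (i : ι))

/-- The Schur complement `A/A[γ]` of the principal submatrix indexed by `γ` in `A`,
indexed by the complementary indices. -/
noncomputable def schurCompl {ι : Type*} [Fintype ι] [DecidableEq ι]
    (A : Matrix ι ι ℝ) (γ : Finset ι) :
    Matrix {i : ι // i ∉ γ} {i : ι // i ∉ γ} ℝ :=
  A.submatrix (fun i : {i : ι // i ∉ γ} => (i : ι)) (fun i : {i : ι // i ∉ γ} => (i : ι)) -
    (A.submatrix (fun i : {i : ι // i ∉ γ} => (i : ι)) (fun i : {i : ι // i ∈ γ} => (i : ι))) *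
    (A.submatrix (fun i : {i : ι // i ∈ γ} => (i : ι)) (fun i : {i : ι // i ∈ γ} => (i : ι)))⁻¹ *
    (A.submatrix (fun i : {i : ι // i ∈ γ} => (i : ι)) (fun i : {i : ι // i ∉ γ} => (i : ι)))

section BlockSubmatrix

variable {α m n μ₁ μ₂ ν₁ ν₂ : Type*} (A : Matrix m n α)

theorem submatrix_sumElim_sumElim (r₁ : μ₁ → m) (r₂ : μ₂ → m) (c₁ : ν₁ → n) (c₂ : ν₂ → n) :
    A.submatrix (Sum.elim r₁ r₂) (Sum.elim c₁ c₂) =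
      fromBlocks (A.submatrix r₁ c₁) (A.submatrix r₁ c₂) (A.submatrix r₂ c₁)
        (A.submatrix r₂ c₂) := by
  ext (i | i) (j | j) <;> rfl

theorem submatrix_sumElim_left (r₁ : μ₁ → m) (r₂ : μ₂ → m) (c : ν₁ → n) :
    A.submatrix (Sum.elim r₁ r₂) c = fromRows (A.submatrix r₁ c) (A.submatrix r₂ c) := by
  ext (i | i) j <;> rfl

theorem submatrix_sumElim_right (r : μ₁ → m) (c₁ : ν₁ → n) (c₂ : ν₂ → n) :
    A.submatrix r (Sum.elim c₁ c₂) = fromCols (A.submatrix r c₁) (A.submatrix r c₂) := by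
  ext i (j | j) <;> rfl

end BlockSubmatrix

section Pivot

variable {R ι κ κ' κ₁ κ₂ μ ν μ' ν' : Type*} [CommRing R]

theorem sub_fromCols_mul_fromBlocks_inv_mul_fromRows [Fintype κ₁] [Fintype κ₂]
    [DecidableEq κ₁] [DecidableEq κ₂]
    (P : Matrix κ₁ κ₁ R) (Q : Matrix κ₁ κ₂ R) (S : Matrix κ₂ κ₁ R) (T : Matrix κ₂ κ₂ R)
    (U : Matrix μ κ₁ R) (V : Matrix μ κ₂ R) (X : Matrix κ₁ ν R) (Y : Matrix κ₂ ν R)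
    (Z : Matrix μ ν R) (hP : IsUnit P.det) (hT : IsUnit (T - S * P⁻¹ * Q).det) :
    Z - fromCols U V * (fromBlocks P Q S T)⁻¹ * fromRows X Y =
      (Z - U * P⁻¹ * X) - (V - U * P⁻¹ * Q) * (T - S * P⁻¹ * Q)⁻¹ * (Y - S * P⁻¹ * X) := by
  have := P.invertibleOfIsUnitDet hP
  have : Invertible (T - S * ⅟P * Q) := by
    rw [invOf_eq_nonsing_inv]
    exact (T - S * P⁻¹ * Q).invertibleOfIsUnitDet hT
  have := fromBlocks₁₁Invertible P Q S T
  rw [← invOf_eq_nonsing_inv (fromBlocks P Q S T), invOf_fromBlocks₁₁_eq, fromCols_mul_fromBlocks,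
    fromCols_mul_fromRows]
  simp only [invOf_eq_nonsing_inv]
  generalize (T - S * P⁻¹ * Q)⁻¹ = W
  generalize P⁻¹ = P'
  simp only [Matrix.sub_mul, Matrix.mul_add, Matrix.add_mul, Matrix.mul_sub, Matrix.mul_assoc,
    Matrix.mul_neg, Matrix.neg_mul]
  abel

noncomputable def schurComplAt [Fintype κ] [DecidableEq κ] (A : Matrix ι ι R) (p : κ → ι)
    (r : μ → ι) (c : ν → ι) : Matrix μ ν R :=
  A.submatrix r c - A.submatrix r p * (A.submatrix p p)⁻¹ * A.submatrix p c

theorem schurCompl_eq_schurComplAt [Fintype ι] [DecidableEq ι] (A : Matrix ι ι ℝ)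
    (γ : Finset ι) :
    schurCompl A γ = schurComplAt A (Subtype.val : γ → ι) Subtype.val Subtype.val :=
  rfl

variable [Fintype κ] [DecidableEq κ] (A : Matrix ι ι R)

theorem submatrix_schurComplAt (p : κ → ι) (r : μ → ι) (c : ν → ι) (f : μ' → μ) (g : ν' → ν) :
    (schurComplAt A p r c).submatrix f g = schurComplAt A p (r ∘ f) (c ∘ g) := by
  ext i j
  simp [schurComplAt, Matrix.mul_apply]

theorem schurComplAt_eq_submatrix (p : κ → ι) (r : μ → ι) (c : ν → ι) :
    schurComplAt A p r c = (schurComplAt A p id id).submatrix r c :=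
  (submatrix_schurComplAt A p id id r c).symm

theorem schurComplAt_comp_equiv [Fintype κ'] [DecidableEq κ'] (p : κ → ι) (e : κ' ≃ κ)
    (r : μ → ι) (c : ν → ι) :
    schurComplAt A (p ∘ e) r c = schurComplAt A p r c := by
  change A.submatrix r c - (A.submatrix r p).submatrix id e *
      ((A.submatrix p p).submatrix e e)⁻¹ * (A.submatrix p c).submatrix e id = _
  rw [inv_submatrix_equiv, submatrix_mul_equiv, submatrix_mul_equiv]
  rfl

theorem det_submatrix_sumElim [Fintype κ₁] [Fintype κ₂] [DecidableEq κ₁] [DecidableEq κ₂]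
    (p₁ : κ₁ → ι) (p₂ : κ₂ → ι) (h₁ : IsUnit (A.submatrix p₁ p₁).det) :
    (A.submatrix (Sum.elim p₁ p₂) (Sum.elim p₁ p₂)).det =
      (A.submatrix p₁ p₁).det * (schurComplAt A p₁ p₂ p₂).det := by
  have := (A.submatrix p₁ p₁).invertibleOfIsUnitDet h₁
  rw [submatrix_sumElim_sumElim, det_fromBlocks₁₁, invOf_eq_nonsing_inv]
  rfl

theorem schurComplAt_sumElim [Fintype κ₁] [Fintype κ₂] [DecidableEq κ₁] [DecidableEq κ₂]
    (p₁ : κ₁ → ι) (p₂ : κ₂ → ι) (r : μ → ι) (c : ν → ι) (h₁ : IsUnit (A.submatrix p₁ p₁).det)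
    (h : IsUnit (A.submatrix (Sum.elim p₁ p₂) (Sum.elim p₁ p₂)).det) :
    schurComplAt A (Sum.elim p₁ p₂) r c = schurComplAt (schurComplAt A p₁ id id) p₂ r c := by
  have h₂ : IsUnit (schurComplAt A p₁ p₂ p₂).det := by
    rw [det_submatrix_sumElim A p₁ p₂ h₁] at h
    exact isUnit_of_mul_isUnit_right h
  rw [schurComplAt, submatrix_sumElim_sumElim, submatrix_sumElim_left, submatrix_sumElim_right,
    sub_fromCols_mul_fromBlocks_inv_mul_fromRows _ _ _ _ _ _ _ _ _ h₁ h₂]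
  rfl

end Pivot

section PrincipalSchurCompl

variable {ι : Type*} [Fintype ι] [DecidableEq ι] {γ β : Finset ι}

def filterMemEquiv (hγβ : γ ⊆ β) :
    {k : β // k ∈ univ.filter fun m : β => (m : ι) ∈ γ} ≃ γ :=
  (Equiv.subtypeEquivRight fun _ => by simp).trans (Equiv.subtypeSubtypeEquivSubtype (hγβ ·))

def filterNotMemEquiv (γ β : Finset ι) :
    {k : {x // x ∉ γ} // k ∈ univ.filter fun m : {x // x ∉ γ} => (m : ι) ∈ β} ≃
      {k : β // (k : ι) ∉ γ} where
  toFun k := ⟨⟨k.1, (mem_filter.1 k.2).2⟩, k.1.2⟩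
  invFun k := ⟨⟨k.1, k.2⟩, by simp⟩
  left_inv _ := rfl
  right_inv _ := rfl

def sumFilterNotMemEquiv (hγβ : γ ⊆ β) :
    γ ⊕ {k : {x // x ∉ γ} // k ∈ univ.filter fun m : {x // x ∉ γ} => (m : ι) ∈ β} ≃ β :=
  (Equiv.sumCongr (Equiv.subtypeSubtypeEquivSubtype (hγβ ·)).symm (filterNotMemEquiv γ β)).trans
    (Equiv.sumCompl fun k : β => (k : ι) ∈ γ)

theorem val_comp_sumFilterNotMemEquiv (hγβ : γ ⊆ β) :
    Subtype.val ∘ sumFilterNotMemEquiv hγβ = Sum.elim Subtype.val fun k => k.1.1 := by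
  ext (x | x) <;> rfl

variable (A : Matrix ι ι ℝ)

theorem schurCompl_principalSub (hγβ : γ ⊆ β) :
    schurCompl (principalSub A β) (univ.filter fun m : β => (m : ι) ∈ γ) =
      (schurCompl A γ).submatrix (fun k => ⟨k.1.1, by simpa using k.2⟩)
        (fun k => ⟨k.1.1, by simpa using k.2⟩) := by
  rw [schurCompl_eq_schurComplAt, schurCompl_eq_schurComplAt, submatrix_schurComplAt]
  exact schurComplAt_comp_equiv A Subtype.val (filterMemEquiv hγβ) _ _

theorem schurCompl_schurCompl (hγβ : γ ⊆ β) (hC : IsUnit (principalSub A γ).det)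
    (hB : IsUnit (principalSub A β).det) :
    schurCompl A β =
      (schurCompl (schurCompl A γ) (univ.filter fun m : {x // x ∉ γ} => (m : ι) ∈ β)).submatrix
        (fun i => ⟨⟨i.1, fun h => i.2 (hγβ h)⟩, by simpa using i.2⟩)
        (fun i => ⟨⟨i.1, fun h => i.2 (hγβ h)⟩, by simpa using i.2⟩) := by
  have he := val_comp_sumFilterNotMemEquiv hγβ
  have hpivot : IsUnit ((principalSub A β).submatrix (sumFilterNotMemEquiv hγβ)
      (sumFilterNotMemEquiv hγβ)).det := by
    rwa [det_submatrix_equiv_self]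
  rw [principalSub, submatrix_submatrix, he] at hpivot
  rw [schurCompl_eq_schurComplAt, ← schurComplAt_comp_equiv A _ (sumFilterNotMemEquiv hγβ), he,
    schurComplAt_sumElim A _ _ _ _ hC hpivot, schurCompl_eq_schurComplAt,
    schurCompl_eq_schurComplAt, submatrix_schurComplAt,
    schurComplAt_eq_submatrix A (Subtype.val : γ → ι) (Subtype.val : {x // x ∉ γ} → ι)]
  rfl

end PrincipalSchurCompl

/-- Crabtree–Haynsworth quotient property: if `C = A[γ]` is a nonsingular principal submatrix
of the nonsingular principal submatrix `B = A[β]` of `A`, then `B/C` is a principal submatrix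
of `A/C`, and `A/B = (A/C)/(B/C)`. -/
theorem crabtree_haynsworth
    (n : ℕ) (A : Matrix (Fin n) (Fin n) ℝ)
    (γ β : Finset (Fin n)) (hγβ : γ ⊆ β)
    (hC : (principalSub A γ).det ≠ 0)
    (hB : (principalSub A β).det ≠ 0) :
    (∀ i j : {k : {l : Fin n // l ∈ β} //
        k ∉ Finset.univ.filter (fun m : {l : Fin n // l ∈ β} => (m : Fin n) ∈ γ)},
      schurCompl (principalSub A β)
          (Finset.univ.filter (fun m : {l : Fin n // l ∈ β} => (m : Fin n) ∈ γ)) i j =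
        schurCompl A γ ⟨((i : {l : Fin n // l ∈ β}) : Fin n), by simpa using i.2⟩
          ⟨((j : {l : Fin n // l ∈ β}) : Fin n), by simpa using j.2⟩) ∧
    (∀ i j : {k : Fin n // k ∉ β},
      schurCompl A β i j =
        schurCompl (schurCompl A γ)
            (Finset.univ.filter (fun m : {l : Fin n // l ∉ γ} => (m : Fin n) ∈ β))
          ⟨⟨(i : Fin n), fun hiγ => i.2 (hγβ hiγ)⟩, by simpa using i.2⟩
          ⟨⟨(j : Fin n), fun hjγ => j.2 (hγβ hjγ)⟩, by simpa using j.2⟩) :=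
  ⟨fun i j => congrFun₂ (schurCompl_principalSub A hγβ) i j,
    fun i j => congrFun₂ (schurCompl_schurCompl A hγβ hC.isUnit hB.isUnit) i j⟩
end
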